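/- arXiv:2603.26812 — 6 statements merged into one kernel-verified Lean document; each statement's English description precedes it below -/
import Mathlib

section
/- Let H be the graph obtained from vertex-disjoint graphs H₁ and H₂ by identifying a vertex u₁ of H₁ with a vertex u₂ of H₂. Then N(H) = N(H₁) + N(H₂) − 1 + (N(H₁)_{u₁} − 1)(N(H₂)_{u₂} − 1). -/
open SimpleGraph

/-- Number of connected sets (nonempty vertex subsets inducing a connected subgraph). -/
noncomputable def numConnSets {V : Type*} [Fintype V] (G : SimpleGraph V) : ℕ :=
  Nat.card {s : Finset V // (G.induce (↑s : Set V)).Connected}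

/-- Number of connected sets containing the vertex `v`. -/
noncomputable def numConnSetsAt {V : Type*} [Fintype V] (G : SimpleGraph V) (v : V) : ℕ :=
  Nat.card {s : Finset V // v ∈ s ∧ (G.induce (↑s : Set V)).Connected}

/-- A graph is bicyclic if it is connected and has one more edge than vertices. -/
def Bicyclic {V : Type*} [Fintype V] (G : SimpleGraph V) : Prop :=
  G.Connected ∧ Nat.card G.edgeSet = Fintype.card V + 1

/-- The tadpole graph `D_m`: a triangle on vertices `0,1,2` with the path
`2,3,…,m-1` attached. -/
def tadpoleGraph (m : ℕ) : SimpleGraph (Fin m) :=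
  SimpleGraph.fromRel (fun i j =>
    ((i : ℕ) = 0 ∧ (j : ℕ) = 1) ∨ ((i : ℕ) = 0 ∧ (j : ℕ) = 2) ∨
    ((i : ℕ) = 1 ∧ (j : ℕ) = 2) ∨ (2 ≤ (i : ℕ) ∧ (j : ℕ) = (i : ℕ) + 1))

/-- The graph `L_n = G[3,3,n-4]`: triangles on `{0,1,2}` and `{n-3,n-2,n-1}`
joined by the path `2,3,…,n-3`. -/
def Lgraph (n : ℕ) : SimpleGraph (Fin n) :=
  SimpleGraph.fromRel (fun i j =>
    ((i : ℕ) = 0 ∧ (j : ℕ) = 1) ∨ ((i : ℕ) = 0 ∧ (j : ℕ) = 2) ∨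
    ((i : ℕ) = 1 ∧ (j : ℕ) = 2) ∨
    (2 ≤ (i : ℕ) ∧ (j : ℕ) = (i : ℕ) + 1 ∧ (j : ℕ) ≤ n - 3) ∨
    ((i : ℕ) = n - 3 ∧ (j : ℕ) = n - 2) ∨ ((i : ℕ) = n - 3 ∧ (j : ℕ) = n - 1) ∨
    ((i : ℕ) = n - 2 ∧ (j : ℕ) = n - 1))

/-- The graph `A_n`: `K₄` minus an edge on `{0,1,2,3}` (missing edge `0-3`,
so `3` has degree `2`) with the path `3,4,…,n-1` attached at `3`. -/
def Agraph (n : ℕ) : SimpleGraph (Fin n) :=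
  SimpleGraph.fromRel (fun i j =>
    ((i : ℕ) = 0 ∧ (j : ℕ) = 1) ∨ ((i : ℕ) = 0 ∧ (j : ℕ) = 2) ∨
    ((i : ℕ) = 1 ∧ (j : ℕ) = 2) ∨ ((i : ℕ) = 1 ∧ (j : ℕ) = 3) ∨
    ((i : ℕ) = 2 ∧ (j : ℕ) = 3) ∨ (3 ≤ (i : ℕ) ∧ (j : ℕ) = (i : ℕ) + 1))

/-- The graph `R_n`: vertex `0 = w` adjacent to all other vertices, with extra
edges `1-2` and `3-4` forming two triangles through `w`; the remaining `n-5`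
neighbours of `w` are leaves. -/
def Rgraph (n : ℕ) : SimpleGraph (Fin n) :=
  SimpleGraph.fromRel (fun i j =>
    ((i : ℕ) = 0 ∧ (j : ℕ) ≠ 0) ∨ ((i : ℕ) = 1 ∧ (j : ℕ) = 2) ∨
    ((i : ℕ) = 3 ∧ (j : ℕ) = 4))

/-- The graph `B_n`: `K₄` minus an edge on `{0,1,2,3}` (missing edge `0-3`,
so `1` has degree `3`) with `n-4` pendant edges `1-4, 1-5, …, 1-(n-1)`
attached at the degree-3 vertex `1`. -/
def Bgraph (n : ℕ) : SimpleGraph (Fin n) :=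
  SimpleGraph.fromRel (fun i j =>
    ((i : ℕ) = 0 ∧ (j : ℕ) = 1) ∨ ((i : ℕ) = 0 ∧ (j : ℕ) = 2) ∨
    ((i : ℕ) = 1 ∧ (j : ℕ) = 2) ∨ ((i : ℕ) = 1 ∧ (j : ℕ) = 3) ∨
    ((i : ℕ) = 2 ∧ (j : ℕ) = 3) ∨ ((i : ℕ) = 1 ∧ 4 ≤ (j : ℕ)))
section OnePointUnionAux

open Finset

variable {V : Type*}

lemma coe_map_subtype (A : Finset V) (t : Finset {x : V // x ∈ (↑A : Set V)}) :
    (Subtype.val '' (↑t : Set {x : V // x ∈ (↑A : Set V)})) =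
      (↑(t.map (Function.Embedding.subtype _)) : Set V) := by
  ext v
  simp only [Set.mem_image, Finset.mem_coe, Finset.mem_map,
    Function.Embedding.coe_subtype, Subtype.exists]

noncomputable def induceInduceIso (H : SimpleGraph V) (A : Finset V)
    (t : Finset {x : V // x ∈ (↑A : Set V)}) :
    (H.induce (↑A : Set V)).induce (↑t : Set _) ≃g
      H.induce (↑(t.map (Function.Embedding.subtype _)) : Set V) where
  toEquiv := (Equiv.Set.image Subtype.val (↑t : Set {x : V // x ∈ (↑A : Set V)})
     Subtype.val_injective).trans (Equiv.setCongr (coe_map_subtype A t))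
  map_rel_iff' := fun {a b} => Iff.rfl

lemma induce_induce_connected (H : SimpleGraph V) (A : Finset V)
    (t : Finset {x : V // x ∈ (↑A : Set V)}) :
    ((H.induce (↑A : Set V)).induce (↑t : Set _)).Connected ↔
      (H.induce (↑(t.map (Function.Embedding.subtype _)) : Set V)).Connected :=
  (induceInduceIso H A t).connected_iff

/-- Generic equivalence between finsets of the subtype satisfying a predicate of the
mapped finset, and subsets of `A` satisfying the predicate. -/
noncomputable def finsetSubtypeEquiv (A : Finset V) [DecidableEq V] (q : Finset V → Prop) :
    {t : Finset {x : V // x ∈ (↑A : Set V)} //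
        q (t.map (Function.Embedding.subtype _))} ≃
      {s : Finset V // s ⊆ A ∧ q s} := by
  classical
  exact {
    toFun := fun t => ⟨t.1.map (Function.Embedding.subtype _), by
      intro x hx
      obtain ⟨a, _, rfl⟩ := Finset.mem_map.mp hx
      exact Finset.mem_coe.mp a.2, t.2⟩
    invFun := fun s => ⟨s.1.subtype _, by
      rw [Finset.subtype_map_of_mem (fun x hx => Finset.mem_coe.mpr (s.2.1 hx))]; exact s.2.2
      ⟩
    left_inv := fun t => by
      apply Subtype.ext
      ext a
      simp only [Finset.mem_subtype, Finset.mem_map, Function.Embedding.coe_subtype]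
      exact ⟨fun ⟨b, hb, h⟩ => (Subtype.ext h : b = a) ▸ hb, fun h => ⟨a, h, rfl⟩⟩
    right_inv := fun s => by
      apply Subtype.ext
      exact Finset.subtype_map_of_mem (fun x hx => Finset.mem_coe.mpr (s.2.1 hx)) }

section Conv
variable [Fintype V] [DecidableEq V] (H : SimpleGraph V) (A : Finset V)

lemma numConnSets_induce :
    numConnSets (H.induce (↑A : Set V)) =
      Nat.card {s : Finset V // s ⊆ A ∧ (H.induce (↑s : Set V)).Connected} :=
  Nat.card_congr <| (Equiv.subtypeEquivRight
    (fun t => induce_induce_connected H A t)).trans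
    (finsetSubtypeEquiv A (fun s => (H.induce (↑s : Set V)).Connected))

lemma mem_map_subtype_iff (t : Finset {x : V // x ∈ (↑A : Set V)}) (u : V) (hu : u ∈ (↑A : Set V)) :
    (⟨u, hu⟩ : {x : V // x ∈ (↑A : Set V)}) ∈ t ↔
      u ∈ t.map (Function.Embedding.subtype _) := by
  simp only [Finset.mem_map, Function.Embedding.coe_subtype]
  exact ⟨fun h => ⟨⟨u, hu⟩, h, rfl⟩, fun ⟨a, ha, h⟩ => (Subtype.ext h : a = ⟨u, hu⟩) ▸ ha⟩

lemma numConnSetsAt_induce (u : V) (hu : u ∈ A) :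
    numConnSetsAt (H.induce (↑A : Set V)) ⟨u, Finset.mem_coe.mpr hu⟩ =
      Nat.card {s : Finset V //
        s ⊆ A ∧ (u ∈ s ∧ (H.induce (↑s : Set V)).Connected)} :=
  Nat.card_congr <| (Equiv.subtypeEquivRight
    (fun t => and_congr (mem_map_subtype_iff A t u (Finset.mem_coe.mpr hu))
      (induce_induce_connected H A t))).trans
    (finsetSubtypeEquiv A (fun s => u ∈ s ∧ (H.induce (↑s : Set V)).Connected))

lemma natCard_subtype {α : Type*} [Fintype α] (P : α → Prop) [DecidablePred P] :
    Nat.card {x // P x} = (Finset.univ.filter P).card := by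
  rw [Nat.card_eq_fintype_card, Fintype.card_subtype]

end Conv

/-- Homomorphism between induced subgraphs on nested vertex sets. -/
def homOfSubset (H : SimpleGraph V) (s t : Set V) (h : s ⊆ t) : H.induce s →g H.induce t :=
  ⟨fun x => ⟨x.1, h x.2⟩, fun a => a⟩

section Graph
variable {H : SimpleGraph V} {A B : Finset V} {u : V}

lemma reach_aux [Fintype V] [DecidableEq V]
    (hsep : ∀ a ∈ A, ∀ b ∈ B, H.Adj a b → a = u ∨ b = u)
    (hunion : A ∪ B = Finset.univ) (huA : u ∈ A)
    {s : Finset V} (hu : u ∈ s) :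
    ∀ {x y : ↑(↑s : Set V)} (_ : (H.induce (↑s : Set V)).Walk x y)
      (hxA : x.1 ∈ A) (_ : y.1 = u),
      (H.induce (↑(s ∩ A) : Set V)).Reachable
        ⟨x.1, Finset.mem_coe.mpr (Finset.mem_inter.mpr ⟨Finset.mem_coe.mp x.2, hxA⟩)⟩
        ⟨u, Finset.mem_coe.mpr (Finset.mem_inter.mpr ⟨hu, huA⟩)⟩ := by
  intro x y w
  induction w with
  | @nil x =>
    intro hxA hxu
    have : (⟨x.1, Finset.mem_coe.mpr (Finset.mem_inter.mpr ⟨Finset.mem_coe.mp x.2, hxA⟩)⟩ :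
        ↑(↑(s ∩ A) : Set V)) =
        ⟨u, Finset.mem_coe.mpr (Finset.mem_inter.mpr ⟨hu, huA⟩)⟩ := Subtype.ext hxu
    rw [this]
  | @cons x y _ hadj p ih =>
    intro hxA hyu
    by_cases hyA : y.1 ∈ A
    · have step : (H.induce (↑(s ∩ A) : Set V)).Adj
          ⟨x.1, Finset.mem_coe.mpr (Finset.mem_inter.mpr ⟨Finset.mem_coe.mp x.2, hxA⟩)⟩
          ⟨y.1, Finset.mem_coe.mpr (Finset.mem_inter.mpr ⟨Finset.mem_coe.mp y.2, hyA⟩)⟩ := hadj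
      exact step.reachable.trans (ih hyA hyu)
    · have hyB : y.1 ∈ B := by
        have := Finset.mem_univ y.1
        rw [← hunion, Finset.mem_union] at this
        tauto
      rcases hsep x.1 hxA y.1 hyB hadj with hxu | hyu'
      · have : (⟨x.1, Finset.mem_coe.mpr (Finset.mem_inter.mpr ⟨Finset.mem_coe.mp x.2, hxA⟩)⟩ :
            ↑(↑(s ∩ A) : Set V)) =
            ⟨u, Finset.mem_coe.mpr (Finset.mem_inter.mpr ⟨hu, huA⟩)⟩ := Subtype.ext hxu
        rw [this]
      · exact absurd (hyu' ▸ huA) hyA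

lemma conn_inter [Fintype V] [DecidableEq V]
    (hsep : ∀ a ∈ A, ∀ b ∈ B, H.Adj a b → a = u ∨ b = u)
    (hunion : A ∪ B = Finset.univ) (huA : u ∈ A)
    {s : Finset V} (hu : u ∈ s) (hs : (H.induce (↑s : Set V)).Connected) :
    (H.induce (↑(s ∩ A) : Set V)).Connected := by
  rw [SimpleGraph.connected_iff_exists_forall_reachable]
  refine ⟨⟨u, Finset.mem_coe.mpr (Finset.mem_inter.mpr ⟨hu, huA⟩)⟩, ?_⟩
  rintro ⟨w, hw⟩
  have hw' := Finset.mem_inter.mp (Finset.mem_coe.mp hw)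
  obtain ⟨p⟩ := hs.preconnected ⟨w, Finset.mem_coe.mpr hw'.1⟩ ⟨u, Finset.mem_coe.mpr hu⟩
  exact (reach_aux hsep hunion huA hu p hw'.2 rfl).symm

lemma mem_u_of_cross [Fintype V] [DecidableEq V]
    (hsep : ∀ a ∈ A, ∀ b ∈ B, H.Adj a b → a = u ∨ b = u)
    (hunion : A ∪ B = Finset.univ) (huA : u ∈ A) (huB : u ∈ B)
    {s : Finset V} (hs : (H.induce (↑s : Set V)).Connected)
    (hnA : ¬ s ⊆ A) (hnB : ¬ s ⊆ B) : u ∈ s := by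
  obtain ⟨b, hbs, hbA⟩ := Finset.not_subset.mp hnA
  obtain ⟨a, has, haB⟩ := Finset.not_subset.mp hnB
  have haA : a ∈ A := by
    have := Finset.mem_univ a
    rw [← hunion, Finset.mem_union] at this
    tauto
  obtain ⟨p⟩ := hs.preconnected ⟨a, Finset.mem_coe.mpr has⟩ ⟨b, Finset.mem_coe.mpr hbs⟩
  revert haA hbA
  generalize hx : (⟨a, _⟩ : ↑(↑s : Set V)) = x at p
  generalize hy : (⟨b, _⟩ : ↑(↑s : Set V)) = y at p
  have hxa : x.1 = a := by rw [← hx]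
  have hyb : y.1 = b := by rw [← hy]
  rw [← hxa, ← hyb]
  clear hx hy hxa hyb
  induction p with
  | @nil x => intro h2 h1; exact absurd h1 h2
  | @cons x y _ hadj p ih =>
    intro hendA hxA
    by_cases hyA' : y.1 ∈ A
    · exact ih hendA hyA'
    · have hyB : y.1 ∈ B := by
        have := Finset.mem_univ y.1
        rw [← hunion, Finset.mem_union] at this
        tauto
      rcases hsep x.1 hxA y.1 hyB hadj with hxu | hyu
      · exact hxu ▸ Finset.mem_coe.mp x.2
      · exact hyu ▸ Finset.mem_coe.mp y.2

lemma conn_union [Fintype V] [DecidableEq V]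
    {sA sB : Finset V} (hA : sA ⊆ A) (hB : sB ⊆ B) (huA' : u ∈ sA) (huB' : u ∈ sB)
    (cA : (H.induce (↑sA : Set V)).Connected) (cB : (H.induce (↑sB : Set V)).Connected) :
    (H.induce (↑(sA ∪ sB) : Set V)).Connected := by
  rw [SimpleGraph.connected_iff_exists_forall_reachable]
  refine ⟨⟨u, Finset.mem_coe.mpr (Finset.mem_union_left _ huA')⟩, ?_⟩
  rintro ⟨w, hw⟩
  rcases Finset.mem_union.mp (Finset.mem_coe.mp hw) with hwA | hwB
  · have r := cA.preconnected ⟨u, Finset.mem_coe.mpr huA'⟩ ⟨w, Finset.mem_coe.mpr hwA⟩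
    exact r.map (homOfSubset H (↑sA) (↑(sA ∪ sB))
      (fun x hx => Finset.mem_coe.mpr (Finset.mem_union_left _ (Finset.mem_coe.mp hx))))
  · have r := cB.preconnected ⟨u, Finset.mem_coe.mpr huB'⟩ ⟨w, Finset.mem_coe.mpr hwB⟩
    exact r.map (homOfSubset H (↑sB) (↑(sA ∪ sB))
      (fun x hx => Finset.mem_coe.mpr (Finset.mem_union_right _ (Finset.mem_coe.mp hx))))

lemma singleton_conn [Fintype V] (H : SimpleGraph V) (u : V) :
    (H.induce (↑({u} : Finset V) : Set V)).Connected := by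
  rw [SimpleGraph.connected_iff_exists_forall_reachable]
  refine ⟨⟨u, by simp⟩, ?_⟩
  rintro ⟨w, hw⟩
  have : w = u := by simpa using hw
  subst this
  rfl

end Graph


end OnePointUnionAux

set_option maxHeartbeats 1000000 in
/-- If a graph  is the one-point union at  of its induced subgraphs on
vertex sets  and  (so  is everything, , and there are
no edges between  and ), then
. -/
theorem numConnSets_onePointUnion
    {V : Type*} [Fintype V] [DecidableEq V] (H : SimpleGraph V)
    (A B : Finset V) (u : V) (huA : u ∈ A) (huB : u ∈ B)
    (hunion : A ∪ B = Finset.univ) (hinter : A ∩ B = {u})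
    (hsep : ∀ a ∈ A, ∀ b ∈ B, H.Adj a b → a = u ∨ b = u) :
    numConnSets H =
      numConnSets (H.induce (↑A : Set V)) + numConnSets (H.induce (↑B : Set V)) - 1 +
        (numConnSetsAt (H.induce (↑A : Set V)) ⟨u, Finset.mem_coe.mpr huA⟩ - 1) *
        (numConnSetsAt (H.induce (↑B : Set V)) ⟨u, Finset.mem_coe.mpr huB⟩ - 1) := by
  classical
  set c : Finset V → Prop := fun s => (H.induce (↑s : Set V)).Connected with hc
  -- symmetric versions of the hypotheses
  have hsep' : ∀ a ∈ B, ∀ b ∈ A, H.Adj a b → a = u ∨ b = u := by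
    intro a ha b hb h
    rcases hsep b hb a ha h.symm with h1 | h1
    · exact Or.inr h1
    · exact Or.inl h1
  have hunion' : B ∪ A = Finset.univ := by rwa [Finset.union_comm]
  have hinter' : B ∩ A = {u} := by rwa [Finset.inter_comm]
  -- basic facts
  have hne : ∀ s : Finset V, c s → s.Nonempty := by
    intro s hs
    obtain ⟨x⟩ := hs.nonempty
    exact ⟨x.1, Finset.mem_coe.mp x.2⟩
  have hsingA : ({u} : Finset V) ⊆ A := Finset.singleton_subset_iff.mpr huA
  have hsingB : ({u} : Finset V) ⊆ B := Finset.singleton_subset_iff.mpr huB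
  have hsc : c {u} := singleton_conn H u
  have hrec : ∀ s : Finset V, (s ∩ A) ∪ (s ∩ B) = s := by
    intro s
    rw [← Finset.inter_union_distrib_left, hunion, Finset.inter_univ]
  have hsubsingle : ∀ s : Finset V, c s → s ⊆ A → s ⊆ B → s = {u} := by
    intro s hs hA hB
    have h1 : s ⊆ {u} := hinter ▸ Finset.subset_inter hA hB
    rcases Finset.subset_singleton_iff.mp h1 with h | h
    · exact absurd (hne s hs) (by simp [h])
    · exact h
  -- conversion to filter cardinalities
  have hH : numConnSets H = (Finset.univ.filter c).card := by
    rw [numConnSets]; exact natCard_subtype c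
  have hCA : numConnSets (H.induce (↑A : Set V)) =
      (Finset.univ.filter (fun s => s ⊆ A ∧ c s)).card := by
    rw [numConnSets_induce, natCard_subtype]
  have hCB : numConnSets (H.induce (↑B : Set V)) =
      (Finset.univ.filter (fun s => s ⊆ B ∧ c s)).card := by
    rw [numConnSets_induce, natCard_subtype]
  have hNA : numConnSetsAt (H.induce (↑A : Set V)) ⟨u, Finset.mem_coe.mpr huA⟩ =
      (Finset.univ.filter (fun s => s ⊆ A ∧ u ∈ s ∧ c s)).card := by
    rw [numConnSetsAt_induce H A u huA, natCard_subtype]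
  have hNB : numConnSetsAt (H.induce (↑B : Set V)) ⟨u, Finset.mem_coe.mpr huB⟩ =
      (Finset.univ.filter (fun s => s ⊆ B ∧ u ∈ s ∧ c s)).card := by
    rw [numConnSetsAt_induce H B u huB, natCard_subtype]
  -- split-off-{u} lemma
  have split : ∀ {P : Finset V → Prop} {i : DecidablePred P}
      {j : DecidablePred fun s => P s ∧ s ≠ {u}}, P {u} →
      (@Finset.filter _ P i Finset.univ).card =
        (@Finset.filter _ _ j Finset.univ).card + 1 := by
    intro P i j hP
    have h1 : @Finset.filter _ P i Finset.univ =
        insert {u} (@Finset.filter _ _ j Finset.univ) := by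
      ext s
      by_cases h : s = {u} <;> simp [h, hP]
    rw [h1, Finset.card_insert_of_notMem (by simp)]
  -- partition of all connected sets
  have part1 : (Finset.univ.filter c).card =
      (Finset.univ.filter (fun s => c s ∧ s ⊆ A)).card +
      (Finset.univ.filter (fun s => c s ∧ ¬ s ⊆ A)).card := by
    rw [← Finset.filter_filter, ← Finset.filter_filter,
      Finset.card_filter_add_card_filter_not]
  have part2 : (Finset.univ.filter (fun s => c s ∧ ¬ s ⊆ A)).card =
      (Finset.univ.filter (fun s => (c s ∧ ¬ s ⊆ A) ∧ s ⊆ B)).card +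
      (Finset.univ.filter (fun s => (c s ∧ ¬ s ⊆ A) ∧ ¬ s ⊆ B)).card := by
    rw [show (Finset.univ.filter fun s => (c s ∧ ¬ s ⊆ A) ∧ s ⊆ B) =
        (Finset.univ.filter (fun s => c s ∧ ¬ s ⊆ A)).filter (fun s => s ⊆ B) from
        (Finset.filter_filter _ _ _).symm,
      show (Finset.univ.filter fun s => (c s ∧ ¬ s ⊆ A) ∧ ¬ s ⊆ B) =
        (Finset.univ.filter (fun s => c s ∧ ¬ s ⊆ A)).filter (fun s => ¬ s ⊆ B) from
        (Finset.filter_filter _ _ _).symm,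
      Finset.card_filter_add_card_filter_not]
  -- identification of the parts
  have E1 : Finset.univ.filter (fun s => c s ∧ s ⊆ A) =
      Finset.univ.filter (fun s => s ⊆ A ∧ c s) := by
    ext s; simp only [Finset.mem_filter]; tauto
  have E2 : Finset.univ.filter (fun s => (c s ∧ ¬ s ⊆ A) ∧ s ⊆ B) =
      Finset.univ.filter (fun s => (s ⊆ B ∧ c s) ∧ s ≠ {u}) := by
    ext s
    simp only [Finset.mem_filter, Finset.mem_univ, true_and]
    constructor
    · rintro ⟨⟨hs, hnA⟩, hB⟩
      refine ⟨⟨hB, hs⟩, ?_⟩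
      rintro rfl
      exact hnA hsingA
    · rintro ⟨⟨hB, hs⟩, hne'⟩
      refine ⟨⟨hs, ?_⟩, hB⟩
      intro hA
      exact hne' (hsubsingle s hs hA hB)
  -- the mixed part is counted by pairs
  have hM : (Finset.univ.filter (fun s => (c s ∧ ¬ s ⊆ A) ∧ ¬ s ⊆ B)).card =
      (Finset.univ.filter (fun s => (s ⊆ A ∧ u ∈ s ∧ c s) ∧ s ≠ {u})).card *
      (Finset.univ.filter (fun s => (s ⊆ B ∧ u ∈ s ∧ c s) ∧ s ≠ {u})).card := by
    rw [← Finset.card_product]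
    apply Finset.card_bij' (i := fun s _ => (s ∩ A, s ∩ B))
      (j := fun p _ => p.1 ∪ p.2)
    · -- hi
      intro s hs
      simp only [Finset.mem_filter, Finset.mem_univ, true_and] at hs
      obtain ⟨⟨hcs, hnA⟩, hnB⟩ := hs
      have hu : u ∈ s := mem_u_of_cross hsep hunion huA huB hcs hnA hnB
      rw [Finset.mem_product]
      constructor
      · simp only [Finset.mem_filter, Finset.mem_univ, true_and]
        refine ⟨⟨Finset.inter_subset_right, Finset.mem_inter.mpr ⟨hu, huA⟩,
          conn_inter hsep hunion huA hu hcs⟩, ?_⟩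
        intro h
        apply hnB
        have := hrec s
        rw [h] at this
        rw [← this]
        intro x hx
        rcases Finset.mem_union.mp hx with h1 | h1
        · rw [Finset.mem_singleton.mp h1]; exact huB
        · exact (Finset.mem_inter.mp h1).2
      · simp only [Finset.mem_filter, Finset.mem_univ, true_and]
        refine ⟨⟨Finset.inter_subset_right, Finset.mem_inter.mpr ⟨hu, huB⟩,
          conn_inter hsep' hunion' huB hu hcs⟩, ?_⟩
        intro h
        apply hnA
        have := hrec s
        rw [h] at this
        rw [← this]
        intro x hx
        rcases Finset.mem_union.mp hx with h1 | h1
        · exact (Finset.mem_inter.mp h1).2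
        · rw [Finset.mem_singleton.mp h1]; exact huA
    · -- hj
      rintro ⟨p1, p2⟩ hp
      rw [Finset.mem_product] at hp
      obtain ⟨hp1, hp2⟩ := hp
      simp only [Finset.mem_filter, Finset.mem_univ, true_and] at hp1 hp2
      obtain ⟨⟨h1A, h1u, h1c⟩, h1ne⟩ := hp1
      obtain ⟨⟨h2B, h2u, h2c⟩, h2ne⟩ := hp2
      simp only [Finset.mem_filter, Finset.mem_univ, true_and]
      obtain ⟨b, hb2, hbu⟩ : ∃ b ∈ p2, b ≠ u := by
        by_contra hcon
        push_neg at hcon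
        apply h2ne
        apply Finset.eq_singleton_iff_unique_mem.mpr
        exact ⟨h2u, hcon⟩
      obtain ⟨a, ha1, hau⟩ : ∃ a ∈ p1, a ≠ u := by
        by_contra hcon
        push_neg at hcon
        apply h1ne
        apply Finset.eq_singleton_iff_unique_mem.mpr
        exact ⟨h1u, hcon⟩
      refine ⟨⟨conn_union h1A h2B h1u h2u h1c h2c, ?_⟩, ?_⟩
      · intro hsub
        apply hbu
        have : b ∈ A ∩ B := Finset.mem_inter.mpr
          ⟨hsub (Finset.mem_union_right _ hb2), h2B hb2⟩
        rw [hinter] at this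
        exact Finset.mem_singleton.mp this
      · intro hsub
        apply hau
        have : a ∈ A ∩ B := Finset.mem_inter.mpr
          ⟨h1A ha1, hsub (Finset.mem_union_left _ ha1)⟩
        rw [hinter] at this
        exact Finset.mem_singleton.mp this
    · -- left inverse
      intro s _
      exact hrec s
    · -- right inverse
      rintro ⟨p1, p2⟩ hp
      rw [Finset.mem_product] at hp
      obtain ⟨hp1, hp2⟩ := hp
      simp only [Finset.mem_filter, Finset.mem_univ, true_and] at hp1 hp2
      obtain ⟨⟨h1A, h1u, _⟩, _⟩ := hp1
      obtain ⟨⟨h2B, h2u, _⟩, _⟩ := hp2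
      have e1 : (p1 ∪ p2) ∩ A = p1 := by
        ext x
        simp only [Finset.mem_inter, Finset.mem_union]
        constructor
        · rintro ⟨h1 | h1, hxA⟩
          · exact h1
          · have : x ∈ A ∩ B := Finset.mem_inter.mpr ⟨hxA, h2B h1⟩
            rw [hinter] at this
            rw [Finset.mem_singleton.mp this]
            exact h1u
        · intro hx
          exact ⟨Or.inl hx, h1A hx⟩
      have e2 : (p1 ∪ p2) ∩ B = p2 := by
        ext x
        simp only [Finset.mem_inter, Finset.mem_union]
        constructor
        · rintro ⟨h1 | h1, hxB⟩
          · have : x ∈ A ∩ B := Finset.mem_inter.mpr ⟨h1A h1, hxB⟩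
            rw [hinter] at this
            rw [Finset.mem_singleton.mp this]
            exact h2u
          · exact h1
        · intro hx
          exact ⟨Or.inr hx, h2B hx⟩
      rw [e1, e2]
    -- final arithmetic
  have sNA : (Finset.univ.filter (fun s => s ⊆ A ∧ u ∈ s ∧ c s)).card =
      (Finset.univ.filter (fun s => (s ⊆ A ∧ u ∈ s ∧ c s) ∧ s ≠ {u})).card + 1 :=
    split ⟨hsingA, Finset.mem_singleton_self u, hsc⟩
  have sNB : (Finset.univ.filter (fun s => s ⊆ B ∧ u ∈ s ∧ c s)).card =
      (Finset.univ.filter (fun s => (s ⊆ B ∧ u ∈ s ∧ c s) ∧ s ≠ {u})).card + 1 :=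
    split ⟨hsingB, Finset.mem_singleton_self u, hsc⟩
  have sCB : (Finset.univ.filter (fun s => s ⊆ B ∧ c s)).card =
      (Finset.univ.filter (fun s => (s ⊆ B ∧ c s) ∧ s ≠ {u})).card + 1 :=
    split ⟨hsingB, hsc⟩
  rw [hH, hCA, hCB, hNA, hNB, part1, part2, E1, E2, hM, sNA, sNB, sCB]
  simp only [Nat.add_sub_cancel]
  generalize (Finset.univ.filter (fun s => (s ⊆ A ∧ u ∈ s ∧ c s) ∧ s ≠ {u})).card *
    (Finset.univ.filter (fun s => (s ⊆ B ∧ u ∈ s ∧ c s) ∧ s ≠ {u})).card = k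
  omega
end

section
/- For every m ≥ 3, the tadpole graph D_m (obtained by identifying one vertex of the cycle C₃ with one endvertex of the path P_{m−2}) satisfies N(D_m) = (m−1)(m+4)/2. -/
open SimpleGraph

section TadpoleAux
open Finset

lemma induce_connected_of_parent {V : Type*} (G : SimpleGraph V) (S : Set V)
    (r : V → ℕ) (s₀ : V) (h₀ : s₀ ∈ S)
    (h : ∀ v ∈ S, v ≠ s₀ → ∃ u ∈ S, G.Adj u v ∧ r u < r v) :
    (G.induce S).Connected := by
  rw [connected_iff]
  refine ⟨?_, ⟨⟨s₀, h₀⟩⟩⟩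
  have key : ∀ n : ℕ, ∀ v : S, r v.1 = n → (G.induce S).Reachable ⟨s₀, h₀⟩ v := by
    intro n
    induction n using Nat.strong_induction_on with
    | _ n ih =>
      intro v hv
      by_cases hvs : v.1 = s₀
      · exact (Subtype.ext hvs : v = ⟨s₀, h₀⟩) ▸ Reachable.refl _
      · obtain ⟨u, hu, hadj, hr⟩ := h v.1 v.2 hvs
        have hre := ih (r u) (hv ▸ hr) ⟨u, hu⟩ rfl
        exact hre.trans (SimpleGraph.Adj.reachable (by exact hadj))
  intro v w
  exact (key _ v rfl).symm.trans (key _ w rfl)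

def C1 {m : ℕ} (S : Finset (Fin m)) : Prop := S.Nonempty ∧ ∀ v ∈ S, (v : ℕ) ≤ 1

def C2 {m : ℕ} (S : Finset (Fin m)) : Prop :=
  (∃ w ∈ S, (w : ℕ) = 2) ∧ ∀ v ∈ S, ∀ k, 2 ≤ k → k ≤ (v : ℕ) → ∃ u ∈ S, (u : ℕ) = k

def C3 {m : ℕ} (S : Finset (Fin m)) : Prop :=
  S.Nonempty ∧ (∀ v ∈ S, 3 ≤ (v : ℕ)) ∧
    ∀ v ∈ S, ∀ k, (∃ u ∈ S, (u : ℕ) ≤ k) → k ≤ (v : ℕ) → ∃ u ∈ S, (u : ℕ) = k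

lemma tadpole_adj {m : ℕ} {u v : Fin m}
    (h : (u : ℕ) ≠ (v : ℕ) ∧
      ((((u : ℕ) = 0 ∧ (v : ℕ) = 1) ∨ ((u : ℕ) = 0 ∧ (v : ℕ) = 2) ∨
        ((u : ℕ) = 1 ∧ (v : ℕ) = 2) ∨ (2 ≤ (u : ℕ) ∧ (v : ℕ) = (u : ℕ) + 1)) ∨
       (((v : ℕ) = 0 ∧ (u : ℕ) = 1) ∨ ((v : ℕ) = 0 ∧ (u : ℕ) = 2) ∨
        ((v : ℕ) = 1 ∧ (u : ℕ) = 2) ∨ (2 ≤ (v : ℕ) ∧ (u : ℕ) = (v : ℕ) + 1)))) :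
    (tadpoleGraph m).Adj u v := by
  rw [tadpoleGraph, SimpleGraph.fromRel_adj]
  exact ⟨Fin.ne_of_val_ne h.1, h.2⟩

lemma conn_of_C1 {m : ℕ} (hm : 3 ≤ m) {S : Finset (Fin m)} (h : C1 S) :
    ((tadpoleGraph m).induce (↑S : Set (Fin m))).Connected := by
  obtain ⟨⟨x, hx⟩, hle⟩ := h
  apply induce_connected_of_parent (tadpoleGraph m) (↑S : Set (Fin m))
    (fun v => if v = x then 0 else 1) x (by exact_mod_cast hx)
  intro v hv hne
  have hv' : v ∈ S := by exact_mod_cast hv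
  have h1 : (v : ℕ) ≤ 1 := hle v hv'
  have h2 : (x : ℕ) ≤ 1 := hle x hx
  have hne' : (v : ℕ) ≠ (x : ℕ) := fun he => hne (Fin.val_injective he)
  refine ⟨x, by exact_mod_cast hx, tadpole_adj (by omega), ?_⟩
  simp [hne]

lemma conn_of_C2 {m : ℕ} {S : Finset (Fin m)} (h : C2 S) :
    ((tadpoleGraph m).induce (↑S : Set (Fin m))).Connected := by
  obtain ⟨⟨w, hw, hw2⟩, hcl⟩ := h
  apply induce_connected_of_parent (tadpoleGraph m) (↑S : Set (Fin m))
    (fun v => if (v : ℕ) < 2 then (v : ℕ) + m else (v : ℕ) - 2) w (by exact_mod_cast hw)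
  intro v hv hne
  have hv' : v ∈ S := by exact_mod_cast hv
  have hne' : (v : ℕ) ≠ (w : ℕ) := fun he => hne (Fin.val_injective he)
  by_cases hsm : (v : ℕ) < 2
  · -- parent is w (which has value 2)
    refine ⟨w, by exact_mod_cast hw, tadpole_adj (by omega), ?_⟩
    have hm3 : (v : ℕ) < m := v.isLt
    split_ifs <;> omega
  · -- v.val ≥ 3; parent has value v.val - 1
    have hv3 : 3 ≤ (v : ℕ) := by omega
    obtain ⟨u, hu, huv⟩ := hcl v hv' ((v : ℕ) - 1) (by omega) (by omega)
    refine ⟨u, by exact_mod_cast hu, tadpole_adj (by omega), ?_⟩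
    split_ifs <;> omega

lemma conn_of_C3 {m : ℕ} {S : Finset (Fin m)} (h : C3 S) :
    ((tadpoleGraph m).induce (↑S : Set (Fin m))).Connected := by
  obtain ⟨hne, h3, hcl⟩ := h
  set x₀ := S.min' hne with hx₀
  apply induce_connected_of_parent (tadpoleGraph m) (↑S : Set (Fin m))
    (fun v => (v : ℕ)) x₀ (by exact_mod_cast S.min'_mem hne)
  intro v hv hvne
  have hv' : v ∈ S := by exact_mod_cast hv
  have hmin : x₀ ≤ v := S.min'_le v hv'
  have hlt : (x₀ : ℕ) < (v : ℕ) :=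
    Fin.lt_iff_val_lt_val.mp (lt_of_le_of_ne hmin (fun h => hvne h.symm))
  obtain ⟨u, hu, huv⟩ := hcl v hv' ((v : ℕ) - 1)
    ⟨x₀, S.min'_mem hne, by omega⟩ (by omega)
  have hu3 : 3 ≤ (u : ℕ) := h3 u hu
  refine ⟨u, by exact_mod_cast hu, tadpole_adj (by omega), by simp; omega⟩

lemma tadpole_cut {m : ℕ} {S : Finset (Fin m)}
    (h : ((tadpoleGraph m).induce (↑S : Set (Fin m))).Connected) {c : ℕ} (hc : 2 ≤ c)
    (hcS : ∀ w ∈ S, (w : ℕ) ≠ c)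
    {x z : Fin m} (hx : x ∈ S) (hz : z ∈ S) (hxc : (x : ℕ) < c) : (z : ℕ) < c := by
  have main : ∀ (a b : (↑S : Set (Fin m))) (w : ((tadpoleGraph m).induce ↑S).Walk a b),
      (a.1 : ℕ) < c → (b.1 : ℕ) < c := by
    intro a b w
    induction w with
    | nil => exact id
    | @cons u d b ha p ih =>
      intro hlt
      apply ih
      have hadj : (tadpoleGraph m).Adj u.1 d.1 := ha
      rw [tadpoleGraph, SimpleGraph.fromRel_adj] at hadj
      have hd : (d.1 : ℕ) ≠ c := hcS d.1 (by exact_mod_cast d.2)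
      omega
  obtain ⟨w⟩ := h.preconnected ⟨x, by exact_mod_cast hx⟩ ⟨z, by exact_mod_cast hz⟩
  exact main _ _ w hxc

lemma conn_iff {m : ℕ} (hm : 3 ≤ m) (S : Finset (Fin m)) :
    ((tadpoleGraph m).induce (↑S : Set (Fin m))).Connected ↔ C1 S ∨ C2 S ∨ C3 S := by
  constructor
  · intro h
    have hne : S.Nonempty := by
      obtain ⟨⟨v, hv⟩⟩ := h.nonempty
      exact ⟨v, by exact_mod_cast hv⟩
    -- interval property
    have interval : ∀ x ∈ S, ∀ z ∈ S, ∀ k : ℕ, 2 ≤ (x : ℕ) → (x : ℕ) ≤ k → k ≤ (z : ℕ) →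
        ∃ u ∈ S, (u : ℕ) = k := by
      intro x hx z hz k h2 hxk hkz
      by_contra hcon
      push_neg at hcon
      have hxlt : (x : ℕ) < k := lt_of_le_of_ne hxk (hcon x hx)
      have := tadpole_cut h (le_trans h2 hxk) hcon hx hz hxlt
      omega
    by_cases h2 : ∃ w ∈ S, (w : ℕ) = 2
    · right; left
      obtain ⟨w, hw, hw2⟩ := h2
      exact ⟨⟨w, hw, hw2⟩, fun v hv k hk2 hkv =>
        interval w hw v hv k (by omega) (by omega) hkv⟩
    · push_neg at h2
      by_cases hbig : ∃ v ∈ S, 2 ≤ (v : ℕ)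
      · right; right
        obtain ⟨z, hz, hz2⟩ := hbig
        have hz3 : 3 ≤ (z : ℕ) := lt_of_le_of_ne hz2 (Ne.symm (h2 z hz))
        have h3 : ∀ v ∈ S, 3 ≤ (v : ℕ) := by
          intro v hv
          by_contra hcon
          have hv1 : (v : ℕ) < 2 := by
            rcases Nat.lt_or_ge (v : ℕ) 2 with h' | h'
            · exact h'
            · exact absurd (lt_of_le_of_ne h' (Ne.symm (h2 v hv))) (by omega)
          have := tadpole_cut h (le_refl 2) h2 hv hz hv1
          omega
        refine ⟨hne, h3, fun v hv k ⟨u, hu, huk⟩ hkv => ?_⟩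
        exact interval u hu v hv k (by have := h3 u hu; omega) huk hkv
      · left
        push_neg at hbig
        exact ⟨hne, fun v hv => by have := hbig v hv; omega⟩
  · rintro (h | h | h)
    · exact conn_of_C1 hm h
    · exact conn_of_C2 h
    · exact conn_of_C3 h

noncomputable def cnt {m : ℕ} (p : Finset (Fin m) → Prop) : Finset (Finset (Fin m)) :=
  @Finset.filter _ p (Classical.decPred p) Finset.univ

lemma mem_cnt {m : ℕ} (p : Finset (Fin m) → Prop) (S : Finset (Fin m)) :
    S ∈ cnt p ↔ p S := by
  classical
  simp [cnt]

lemma card_C1 {m : ℕ} (hm : 3 ≤ m) : (cnt (fun S : Finset (Fin m) => C1 S)).card = 3 := by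
  classical
  have h0 : (0 : ℕ) < m := by omega
  have h1 : (1 : ℕ) < m := by omega
  set a : Fin m := ⟨0, h0⟩ with ha
  set b : Fin m := ⟨1, h1⟩ with hb
  have hab : a ≠ b := by simp [ha, hb, Fin.ext_iff]
  have hset : cnt (fun S : Finset (Fin m) => C1 S) = {{a}, {b}, {a, b}} := by
    ext S
    rw [mem_cnt]
    simp only [mem_insert, mem_singleton]
    constructor
    · rintro ⟨hne, hle⟩
      have hsub : ∀ v ∈ S, v = a ∨ v = b := by
        intro v hv
        have := hle v hv
        simp only [Fin.ext_iff, ha, hb]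
        omega
      by_cases haS : a ∈ S <;> by_cases hbS : b ∈ S
      · right; right
        apply Finset.Subset.antisymm
        · intro v hv
          rcases hsub v hv with rfl | rfl
          · exact mem_insert_self _ _
          · exact mem_insert_of_mem (mem_singleton_self _)
        · exact Finset.insert_subset haS (Finset.singleton_subset_iff.mpr hbS)
      · left
        apply Finset.Subset.antisymm
        · intro v hv
          rcases hsub v hv with rfl | rfl
          · exact mem_singleton_self _
          · exact absurd hv hbS
        · exact Finset.singleton_subset_iff.mpr haS
      · right; left
        apply Finset.Subset.antisymm
        · intro v hv
          rcases hsub v hv with rfl | rfl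
          · exact absurd hv haS
          · exact mem_singleton_self _
        · exact Finset.singleton_subset_iff.mpr hbS
      · obtain ⟨x, hx⟩ := hne
        rcases hsub x hx with rfl | rfl
        · exact absurd hx haS
        · exact absurd hx hbS
    · rintro (rfl | rfl | rfl)
      · exact ⟨⟨a, by simp⟩, by simp [ha]⟩
      · exact ⟨⟨b, by simp⟩, by simp [hb]⟩
      · refine ⟨⟨a, by simp⟩, ?_⟩
        intro v hv
        rcases mem_insert.mp hv with rfl | hv'
        · simp [ha]
        · rw [mem_singleton.mp hv', hb]
  rw [hset]
  have hne1 : ({a} : Finset (Fin m)) ≠ {b} := fun h => hab (Finset.singleton_inj.mp h)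
  have hne2 : ({a} : Finset (Fin m)) ≠ {a, b} := by
    intro h
    have : b ∈ ({a} : Finset (Fin m)) := by rw [h]; exact mem_insert_of_mem (mem_singleton_self _)
    exact hab (mem_singleton.mp this).symm
  have hne3 : ({b} : Finset (Fin m)) ≠ {a, b} := by
    intro h
    have : a ∈ ({b} : Finset (Fin m)) := by rw [h]; exact mem_insert_self _ _
    exact hab (mem_singleton.mp this)
  rw [card_insert_of_notMem (by simp [hne1, hne2]),
    card_insert_of_notMem (by simp [hne3]), card_singleton]

def Iset (m a b : ℕ) : Finset (Fin m) :=
  Finset.univ.filter (fun v => a ≤ (v : ℕ) ∧ (v : ℕ) ≤ b)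

lemma mem_Iset {m a b : ℕ} (v : Fin m) : v ∈ Iset m a b ↔ a ≤ (v : ℕ) ∧ (v : ℕ) ≤ b := by
  simp [Iset]

lemma card_C2 {m : ℕ} (hm : 3 ≤ m) :
    (cnt (fun S : Finset (Fin m) => C2 S)).card = 4 * (m - 2) := by
  classical
  have h0 : (0 : ℕ) < m := by omega
  have h1 : (1 : ℕ) < m := by omega
  set a : Fin m := ⟨0, h0⟩ with ha
  set b : Fin m := ⟨1, h1⟩ with hb
  have hab : a ≠ b := by simp [ha, hb, Fin.ext_iff]
  have key : (((({a, b} : Finset (Fin m)).powerset) ×ˢ (Finset.Icc 2 (m - 1))).card) = 4 * (m - 2) := by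
    rw [Finset.card_product, Finset.card_powerset, Finset.card_insert_of_notMem (by simp [hab]),
      Finset.card_singleton, Nat.card_Icc]
    have : m - 1 + 1 - 2 = m - 2 := by omega
    rw [this]
    norm_num
  rw [← key]
  symm
  apply Finset.card_bij (fun (p : Finset (Fin m) × ℕ) _ => p.1 ∪ Iset m 2 p.2)
  · -- maps into cnt C2
    rintro ⟨T, bb⟩ hp
    rw [Finset.mem_product, Finset.mem_powerset, Finset.mem_Icc] at hp
    have hT := hp.1
    have hb2 := hp.2.1
    have hbm := hp.2.2
    rw [mem_cnt]
    constructor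
    · refine ⟨⟨2, by omega⟩, ?_, rfl⟩
      exact Finset.mem_union_right _ ((mem_Iset _).mpr ⟨by simp, by simp; omega⟩)
    · intro v hv k hk2 hkv
      have hvb : (v : ℕ) ≤ bb := by
        rcases Finset.mem_union.mp hv with h | h
        · have := hT h
          rcases Finset.mem_insert.mp this with rfl | h'
          · simp [ha] at hkv; omega
          · rw [Finset.mem_singleton.mp h'] at hkv ⊢; simp [hb] at hkv; omega
        · exact ((mem_Iset _).mp h).2
      exact ⟨⟨k, by omega⟩, Finset.mem_union_right _ ((mem_Iset _).mpr ⟨hk2, by simp; omega⟩), rfl⟩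
  · -- injective
    rintro ⟨T₁, b₁⟩ hp₁ ⟨T₂, b₂⟩ hp₂ heq
    rw [Finset.mem_product, Finset.mem_powerset, Finset.mem_Icc] at hp₁ hp₂
    have hsmall : ∀ (T : Finset (Fin m)), T ⊆ {a, b} → ∀ v ∈ T, (v : ℕ) ≤ 1 := by
      intro T hT v hv
      rcases Finset.mem_insert.mp (hT hv) with rfl | h'
      · simp [ha]
      · rw [Finset.mem_singleton.mp h', hb]
    have hTeq : ∀ (T₁ T₂ : Finset (Fin m)) (b₁ b₂ : ℕ), T₁ ⊆ {a, b} → T₂ ⊆ {a, b} →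
        T₁ ∪ Iset m 2 b₁ = T₂ ∪ Iset m 2 b₂ → T₁ ⊆ T₂ := by
      intro T₁ T₂ b₁ b₂ h₁ h₂ he v hv
      have hv1 : (v : ℕ) ≤ 1 := hsmall T₁ h₁ v hv
      have : v ∈ T₂ ∪ Iset m 2 b₂ := he ▸ Finset.mem_union_left _ hv
      rcases Finset.mem_union.mp this with h | h
      · exact h
      · have := ((mem_Iset _).mp h).1; omega
    have hbeq : ∀ (T₁ T₂ : Finset (Fin m)) (b₁ b₂ : ℕ), T₁ ⊆ {a, b} → T₂ ⊆ {a, b} →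
        2 ≤ b₁ → b₁ ≤ m - 1 → T₁ ∪ Iset m 2 b₁ = T₂ ∪ Iset m 2 b₂ → b₁ ≤ b₂ := by
      intro T₁ T₂ b₁ b₂ h₁ h₂ hb2 hbm he
      have hmem : (⟨b₁, by omega⟩ : Fin m) ∈ T₁ ∪ Iset m 2 b₁ :=
        Finset.mem_union_right _ ((mem_Iset _).mpr ⟨by simp; omega, by simp⟩)
      rw [he] at hmem
      rcases Finset.mem_union.mp hmem with h | h
      · have := hsmall T₂ h₂ _ h; simp at this; omega
      · have := ((mem_Iset _).mp h).2; simpa using this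
    have e1 : T₁ = T₂ := Finset.Subset.antisymm
      (hTeq T₁ T₂ b₁ b₂ hp₁.1 hp₂.1 heq) (hTeq T₂ T₁ b₂ b₁ hp₂.1 hp₁.1 heq.symm)
    have e2 : b₁ = b₂ := le_antisymm
      (hbeq T₁ T₂ b₁ b₂ hp₁.1 hp₂.1 hp₁.2.1 hp₁.2.2 heq)
      (hbeq T₂ T₁ b₂ b₁ hp₂.1 hp₁.1 hp₂.2.1 hp₂.2.2 heq.symm)
    simp [e1, e2]
  · -- surjective
    intro S hS
    rw [mem_cnt] at hS
    obtain ⟨⟨w, hw, hw2⟩, hcl⟩ := hS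
    have hSne : S.Nonempty := ⟨w, hw⟩
    have hine : (S.image (fun v : Fin m => (v : ℕ))).Nonempty := hSne.image _
    set bb := (S.image (fun v : Fin m => (v : ℕ))).max' hine with hbbdef
    have hble : ∀ v ∈ S, (v : ℕ) ≤ bb := fun v hv =>
      Finset.le_max' _ _ (Finset.mem_image_of_mem _ hv)
    obtain ⟨z, hz, hzb⟩ := Finset.mem_image.mp (Finset.max'_mem _ hine)
    have hb2 : 2 ≤ bb := hw2 ▸ hble w hw
    have hbm : bb ≤ m - 1 := by have := z.isLt; omega
    refine ⟨(S.filter (fun v => (v : ℕ) ≤ 1), bb), ?_, ?_⟩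
    · rw [Finset.mem_product, Finset.mem_powerset, Finset.mem_Icc]
      refine ⟨?_, hb2, hbm⟩
      intro v hv
      have := (Finset.mem_filter.mp hv).2
      simp only [Finset.mem_insert, Finset.mem_singleton, Fin.ext_iff, ha, hb]
      omega
    · ext v
      simp only [Finset.mem_union, Finset.mem_filter, mem_Iset]
      constructor
      · rintro (⟨hvS, _⟩ | ⟨h2v, hvb⟩)
        · exact hvS
        · obtain ⟨u, hu, hue⟩ := hcl z hz (v : ℕ) h2v (hzb ▸ hvb)
          rwa [show u = v from Fin.ext hue] at hu
      · intro hv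
        by_cases hv1 : (v : ℕ) ≤ 1
        · exact Or.inl ⟨hv, hv1⟩
        · exact Or.inr ⟨by omega, hble v hv⟩

lemma gauss_sum : ∀ n : ℕ, (∑ a ∈ Finset.Icc 3 (n + 2), (n + 3 - a)) * 2 = n * (n + 1) := by
  intro n
  induction n with
  | zero => rw [Finset.Icc_eq_empty (by omega)]; simp
  | succ n ih =>
    have e1 : n + 1 + 2 = (n + 2) + 1 := by omega
    rw [e1, Finset.sum_Icc_succ_top (by omega)]
    have e2 : ∑ a ∈ Finset.Icc 3 (n + 2), (n + 1 + 3 - a)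
        = (∑ a ∈ Finset.Icc 3 (n + 2), (n + 3 - a)) + ∑ a ∈ Finset.Icc 3 (n + 2), 1 := by
      rw [← Finset.sum_add_distrib]
      apply Finset.sum_congr rfl
      intro a hamem
      rw [Finset.mem_Icc] at hamem
      omega
    have e3 : ∑ a ∈ Finset.Icc 3 (n + 2), (1:ℕ) = n := by
      rw [Finset.sum_const, smul_eq_mul, mul_one, Nat.card_Icc]
      omega
    rw [e2, e3]
    have e4 : n + 1 + 3 - (n + 2 + 1) = 1 := by omega
    rw [e4]
    have e5 : (n + 1) * (n + 1 + 1) = n * (n + 1) + 2 * (n + 1) := by ring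
    rw [e5, ← ih]
    ring

lemma card_C3 {m : ℕ} (hm : 3 ≤ m) :
    (cnt (fun S : Finset (Fin m) => C3 S)).card * 2 = (m - 3) * (m - 2) := by
  classical
  obtain ⟨n, rfl⟩ : ∃ n, m = n + 3 := ⟨m - 3, by omega⟩
  have hsig : ((Finset.Icc 3 (n + 2)).sigma (fun a => Finset.Icc a (n + 2))).card
      = ∑ a ∈ Finset.Icc 3 (n + 2), (n + 3 - a) := by
    rw [Finset.card_sigma]
    apply Finset.sum_congr rfl
    intro a hamem
    rw [Finset.mem_Icc] at hamem
    rw [Nat.card_Icc]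
  have hbij : (cnt (fun S : Finset (Fin (n + 3)) => C3 S)).card
      = ((Finset.Icc 3 (n + 2)).sigma (fun a => Finset.Icc a (n + 2))).card := by
    symm
    apply Finset.card_bij (fun (p : (_ : ℕ) × ℕ) _ => Iset (n + 3) p.1 p.2)
    · rintro ⟨a, b⟩ hp
      show Iset (n + 3) a b ∈ cnt (fun S : Finset (Fin (n + 3)) => C3 S)
      simp only [Finset.mem_sigma, Finset.mem_Icc] at hp
      obtain ⟨⟨h3a, ham⟩, hab, hbm⟩ := hp
      rw [mem_cnt]
      refine ⟨⟨⟨a, by omega⟩, (mem_Iset _).mpr ⟨by simp, by simp; omega⟩⟩, ?_, ?_⟩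
      · intro v hv
        have := ((mem_Iset _).mp hv).1
        omega
      · intro v hv k ⟨u, hu, huk⟩ hkv
        have h1 := (mem_Iset _).mp hv
        have h2 := (mem_Iset _).mp hu
        exact ⟨⟨k, by omega⟩, (mem_Iset _).mpr ⟨by simp; omega, by simp; omega⟩, rfl⟩
    · rintro ⟨a₁, b₁⟩ hp₁ ⟨a₂, b₂⟩ hp₂ heq
      simp only [Finset.mem_sigma, Finset.mem_Icc] at hp₁ hp₂
      have hmin : ∀ (a₁ b₁ a₂ b₂ : ℕ), 3 ≤ a₁ → a₁ ≤ b₁ → b₁ ≤ n + 2 →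
          Iset (n + 3) a₁ b₁ = Iset (n + 3) a₂ b₂ → a₂ ≤ a₁ ∧ b₁ ≤ b₂ := by
        intro a₁ b₁ a₂ b₂ h3 hab hbm he
        constructor
        · have : (⟨a₁, by omega⟩ : Fin (n + 3)) ∈ Iset (n + 3) a₂ b₂ :=
            he ▸ (mem_Iset _).mpr ⟨by simp, by simp; omega⟩
          have := ((mem_Iset _).mp this).1
          simpa using this
        · have : (⟨b₁, by omega⟩ : Fin (n + 3)) ∈ Iset (n + 3) a₂ b₂ :=
            he ▸ (mem_Iset _).mpr ⟨by simp; omega, by simp⟩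
          have := ((mem_Iset _).mp this).2
          simpa using this
      have r₁ := hmin a₁ b₁ a₂ b₂ hp₁.1.1 hp₁.2.1 hp₁.2.2 heq
      have r₂ := hmin a₂ b₂ a₁ b₁ hp₂.1.1 hp₂.2.1 hp₂.2.2 heq.symm
      have ea : a₁ = a₂ := le_antisymm r₂.1 r₁.1
      have eb : b₁ = b₂ := le_antisymm r₁.2 r₂.2
      subst ea; subst eb; rfl
    · intro S hS
      rw [mem_cnt] at hS
      obtain ⟨hne, h3, hcl⟩ := hS
      have hine : (S.image (fun v : Fin (n + 3) => (v : ℕ))).Nonempty := hne.image _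
      set aa := (S.image (fun v : Fin (n + 3) => (v : ℕ))).min' hine with haadef
      set bb := (S.image (fun v : Fin (n + 3) => (v : ℕ))).max' hine with hbbdef
      have hale : ∀ v ∈ S, aa ≤ (v : ℕ) := fun v hv =>
        Finset.min'_le _ _ (Finset.mem_image_of_mem _ hv)
      have hble : ∀ v ∈ S, (v : ℕ) ≤ bb := fun v hv =>
        Finset.le_max' _ _ (Finset.mem_image_of_mem _ hv)
      have hamem : aa ∈ S.image (fun v : Fin (n + 3) => (v : ℕ)) := Finset.min'_mem _ hine
      have hbmem : bb ∈ S.image (fun v : Fin (n + 3) => (v : ℕ)) := Finset.max'_mem _ hine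
      obtain ⟨x, hx, hxa⟩ := Finset.mem_image.mp hamem
      obtain ⟨z, hz, hzb⟩ := Finset.mem_image.mp hbmem
      have h3a : 3 ≤ aa := hxa ▸ h3 x hx
      have hbm : bb ≤ n + 2 := by have := z.isLt; omega
      have hab : aa ≤ bb := hxa ▸ hble x hx
      refine ⟨⟨aa, bb⟩, ?_, ?_⟩
      · simp only [Finset.mem_sigma, Finset.mem_Icc]
        exact ⟨⟨h3a, by omega⟩, hab, hbm⟩
      · show Iset (n + 3) aa bb = S
        ext v
        rw [mem_Iset]
        constructor
        · rintro ⟨hav, hvb⟩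
          obtain ⟨u, hu, hue⟩ := hcl z hz (v : ℕ) ⟨x, hx, by omega⟩ (by omega)
          rwa [show u = v from Fin.ext hue] at hu
        · intro hv
          exact ⟨hale v hv, hble v hv⟩
  rw [hbij, hsig, gauss_sum]
  have e1 : n + 3 - 3 = n := by omega
  have e2 : n + 3 - 2 = n + 1 := by omega
  rw [e1, e2]


end TadpoleAux

theorem numConnSets_tadpole (m : ℕ) (hm : 3 ≤ m) :
    numConnSets (tadpoleGraph m) = (m - 1) * (m + 4) / 2 := by
  classical
  have hcard : numConnSets (tadpoleGraph m)
      = (cnt (fun S : Finset (Fin m) =>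
          ((tadpoleGraph m).induce (↑S : Set (Fin m))).Connected)).card := by
    rw [numConnSets, Nat.card_eq_fintype_card, Fintype.card_subtype]
    congr 1
    ext S
    simp only [Finset.mem_filter, mem_cnt, Finset.mem_univ, true_and]
  rw [hcard]
  have hEq : cnt (fun S : Finset (Fin m) =>
        ((tadpoleGraph m).induce (↑S : Set (Fin m))).Connected)
      = (cnt (fun S : Finset (Fin m) => C1 S) ∪ cnt (fun S => C2 S)) ∪ cnt (fun S => C3 S) := by
    ext S
    simp only [Finset.mem_union, mem_cnt]
    rw [conn_iff hm S]
    tauto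
  rw [hEq]
  have hd12 : Disjoint (cnt (fun S : Finset (Fin m) => C1 S)) (cnt (fun S => C2 S)) := by
    rw [Finset.disjoint_left]
    intro S h1 h2
    rw [mem_cnt] at h1 h2
    obtain ⟨w, hw, hw2⟩ := h2.1
    have := h1.2 w hw
    omega
  have hd3 : Disjoint ((cnt (fun S : Finset (Fin m) => C1 S)) ∪ cnt (fun S => C2 S))
      (cnt (fun S => C3 S)) := by
    rw [Finset.disjoint_left]
    intro S h12 h3
    rw [Finset.mem_union, mem_cnt, mem_cnt] at h12
    rw [mem_cnt] at h3
    rcases h12 with h1 | h2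
    · obtain ⟨x, hx⟩ := h1.1
      have := h1.2 x hx
      have := h3.2.1 x hx
      omega
    · obtain ⟨w, hw, hw2⟩ := h2.1
      have := h3.2.1 w hw
      omega
  rw [Finset.card_union_of_disjoint hd3, Finset.card_union_of_disjoint hd12,
    card_C1 hm, card_C2 hm]
  obtain ⟨n, rfl⟩ : ∃ n, m = n + 3 := ⟨m - 3, by omega⟩
  have hX : (cnt (fun S : Finset (Fin (n + 3)) => C3 S)).card * 2 = n * (n + 1) :=
    card_C3 hm
  have hr : (n + 2) * (n + 7) = n * (n + 1) + (8 * n + 14) := by ring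
  show 3 + 4 * (n + 1) + (cnt (fun S : Finset (Fin (n + 3)) => C3 S)).card
      = (n + 2) * (n + 7) / 2
  rw [hr, ← hX]
  omega
end

section
/- For all n ≥ 5, the graph L_n = G[3,3,n−4], obtained from two disjoint triangles joined by a path on n−4 vertices (one endvertex of the path identified with a vertex of each triangle), satisfies N(L_n) = (n+6)(n−1)/2. -/
open SimpleGraph

namespace LP

variable {n : ℕ}

def rel (n : ℕ) (i j : Fin n) : Prop :=
    ((i : ℕ) = 0 ∧ (j : ℕ) = 1) ∨ ((i : ℕ) = 0 ∧ (j : ℕ) = 2) ∨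
    ((i : ℕ) = 1 ∧ (j : ℕ) = 2) ∨
    (2 ≤ (i : ℕ) ∧ (j : ℕ) = (i : ℕ) + 1 ∧ (j : ℕ) ≤ n - 3) ∨
    ((i : ℕ) = n - 3 ∧ (j : ℕ) = n - 2) ∨ ((i : ℕ) = n - 3 ∧ (j : ℕ) = n - 1) ∨
    ((i : ℕ) = n - 2 ∧ (j : ℕ) = n - 1)

lemma lgraph_adj (u v : Fin n) :
    (Lgraph n).Adj u v ↔ (u : ℕ) ≠ (v : ℕ) ∧ (rel n u v ∨ rel n v u) := by
  rw [Lgraph, SimpleGraph.fromRel_adj]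
  simp [rel, Fin.ext_iff]

lemma not_connected_of_cut {V : Type*} (G : SimpleGraph V) (s : Finset V)
    (p : V → Prop) (a b : V) (ha : a ∈ s) (hpa : p a) (hb : b ∈ s) (hpb : ¬ p b)
    (hcut : ∀ x ∈ s, ∀ y ∈ s, p x → ¬ p y → ¬ G.Adj x y) :
    ¬ (G.induce (↑s : Set V)).Connected := by
  intro hc
  have hr : (G.induce (↑s : Set V)).Reachable ⟨a, ha⟩ ⟨b, hb⟩ := hc.preconnected _ _
  obtain ⟨w⟩ := hr
  have key : ∀ (x y : (↑s : Set V)) (_ : (G.induce (↑s : Set V)).Walk x y), p ↑x → p ↑y := by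
    intro x y w
    induction w with
    | nil => exact id
    | @cons u z y h _ ih =>
      intro hx
      apply ih
      by_contra hz
      exact hcut _ (by exact_mod_cast u.2) _ (by exact_mod_cast z.2) hx hz (by simpa using h)
  exact hpb (key _ _ w hpa)

lemma ne_val_of_not_mem {s : Finset (Fin n)} {x : Fin n} (hx : x ∈ s) {k : ℕ} (hk : k < n)
    (h : (⟨k, hk⟩ : Fin n) ∉ s) : (x : ℕ) ≠ k :=
  fun he => h ((Fin.ext he : x = ⟨k, hk⟩) ▸ hx)

/-- Structural lemma 1: the path part of a connected set is an interval. -/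
lemma struct1 (hn : 5 ≤ n) {s : Finset (Fin n)} (hc : ((Lgraph n).induce (↑s : Set (Fin n))).Connected)
    (u v w : Fin n) (hu : u ∈ s) (hw : w ∈ s) (h2 : 2 ≤ (u : ℕ)) (huv : (u : ℕ) ≤ (v : ℕ))
    (hvw : (v : ℕ) ≤ (w : ℕ)) (hw3 : (w : ℕ) ≤ n - 3) : v ∈ s := by
  by_contra hv
  rcases eq_or_lt_of_le huv with he | huv'
  · exact hv ((Fin.ext he : u = v) ▸ hu)
  rcases eq_or_lt_of_le hvw with he | hvw'
  · exact hv ((Fin.ext he : v = w).symm ▸ hw)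
  refine not_connected_of_cut (Lgraph n) s (fun x => (x : ℕ) < (v : ℕ)) u w hu huv' hw
    (by omega) ?_ hc
  intro x hx y hy hpx hpy hadj
  rw [lgraph_adj] at hadj
  unfold rel at hadj
  have hxv : (x : ℕ) ≠ (v : ℕ) := ne_val_of_not_mem hx v.2 (by simpa using hv)
  have hyv : (y : ℕ) ≠ (v : ℕ) := ne_val_of_not_mem hy v.2 (by simpa using hv)
  omega

/-- Structural lemma 2: left attachment. -/
lemma struct2 (hn : 5 ≤ n) {s : Finset (Fin n)} (hc : ((Lgraph n).induce (↑s : Set (Fin n))).Connected)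
    (hL : ∃ a ∈ s, (a : ℕ) ≤ 1) (hP : ∃ p ∈ s, 2 ≤ (p : ℕ) ∧ (p : ℕ) ≤ n - 3) :
    (⟨2, by omega⟩ : Fin n) ∈ s := by
  by_contra h2
  obtain ⟨a, ha, ha1⟩ := hL
  obtain ⟨b, hb, hb1, hb2⟩ := hP
  refine not_connected_of_cut (Lgraph n) s (fun x => (x : ℕ) ≤ 1) a b ha ha1 hb (by omega) ?_ hc
  intro x hx y hy hpx hpy hadj
  rw [lgraph_adj] at hadj
  unfold rel at hadj
  have hy2 : (y : ℕ) ≠ 2 := ne_val_of_not_mem hy (by omega) h2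
  have hx2 : (x : ℕ) ≠ 2 := ne_val_of_not_mem hx (by omega) h2
  omega

/-- Structural lemma 3: right attachment. -/
lemma struct3 (hn : 5 ≤ n) {s : Finset (Fin n)} (hc : ((Lgraph n).induce (↑s : Set (Fin n))).Connected)
    (hR : ∃ b ∈ s, n - 2 ≤ (b : ℕ)) (hP : ∃ p ∈ s, 2 ≤ (p : ℕ) ∧ (p : ℕ) ≤ n - 3) :
    (⟨n - 3, by omega⟩ : Fin n) ∈ s := by
  by_contra h3
  obtain ⟨a, ha, ha1⟩ := hR
  obtain ⟨b, hb, hb1, hb2⟩ := hP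
  refine not_connected_of_cut (Lgraph n) s (fun x => n - 2 ≤ (x : ℕ)) a b ha ha1 hb (by omega) ?_ hc
  intro x hx y hy hpx hpy hadj
  rw [lgraph_adj] at hadj
  unfold rel at hadj
  have hy3 : (y : ℕ) ≠ n - 3 := ne_val_of_not_mem hy (by omega) h3
  have hx3 : (x : ℕ) ≠ n - 3 := ne_val_of_not_mem hx (by omega) h3
  omega

/-- Structural lemma 4: both blobs occupied forces a path vertex. -/
lemma struct4 (hn : 5 ≤ n) {s : Finset (Fin n)} (hc : ((Lgraph n).induce (↑s : Set (Fin n))).Connected)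
    (hL : ∃ a ∈ s, (a : ℕ) ≤ 1) (hR : ∃ b ∈ s, n - 2 ≤ (b : ℕ)) :
    ∃ p ∈ s, 2 ≤ (p : ℕ) ∧ (p : ℕ) ≤ n - 3 := by
  by_contra hP
  push_neg at hP
  obtain ⟨a, ha, ha1⟩ := hL
  obtain ⟨b, hb, hb1⟩ := hR
  refine not_connected_of_cut (Lgraph n) s (fun x => (x : ℕ) ≤ 1) a b ha ha1 hb (by omega) ?_ hc
  intro x hx y hy hpx hpy hadj
  rw [lgraph_adj] at hadj
  unfold rel at hadj
  have hyP := hP y hy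
  have hxP := hP x hx
  omega


/-- Reachability along a path interval inside an induced subgraph. -/
lemma reach_path (hn : 5 ≤ n) (s : Finset (Fin n)) :
    ∀ (k : ℕ) (u v : Fin n) (hu : u ∈ s) (hv : v ∈ s), (v : ℕ) = (u : ℕ) + k →
    2 ≤ (u : ℕ) → (v : ℕ) ≤ n - 3 →
    (∀ w : Fin n, (u : ℕ) ≤ (w : ℕ) → (w : ℕ) ≤ (v : ℕ) → w ∈ s) →
    ((Lgraph n).induce (↑s : Set (Fin n))).Reachable ⟨u, hu⟩ ⟨v, hv⟩ := by
  intro k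
  induction k with
  | zero =>
    intro u v hu hv hk _ _ _
    have : u = v := Fin.ext (by omega)
    subst this
    rfl
  | succ k ih =>
    intro u v hu hv hk h2 h3 hall
    have hun : (u : ℕ) + 1 < n := by omega
    set u' : Fin n := ⟨(u : ℕ) + 1, hun⟩ with hu'def
    have hval : (u' : ℕ) = (u : ℕ) + 1 := rfl
    have hu' : u' ∈ s := hall u' (by omega) (by omega)
    have hadj : ((Lgraph n).induce (↑s : Set (Fin n))).Adj ⟨u, hu⟩ ⟨u', hu'⟩ := by
      simp only [comap_adj, Function.Embedding.coe_subtype]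
      rw [lgraph_adj]
      refine ⟨by omega, Or.inl ?_⟩
      unfold rel
      omega
    refine hadj.reachable.trans (ih u' v hu' hv (by omega) (by omega) h3 ?_)
    intro w hw1 hw2
    exact hall w (by omega) hw2

/-- Connectivity for clique-like blob sets. -/
lemma connected_of_clique (s : Finset (Fin n)) (hne : s.Nonempty)
    (h : ∀ x ∈ s, ∀ y ∈ s, x ≠ y → (Lgraph n).Adj x y) :
    ((Lgraph n).induce (↑s : Set (Fin n))).Connected := by
  rw [connected_iff_exists_forall_reachable]
  obtain ⟨a, ha⟩ := hne
  refine ⟨⟨a, ha⟩, ?_⟩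
  rintro ⟨w, hw⟩
  rcases eq_or_ne a w with rfl | hne'
  · rfl
  · exact Adj.reachable (by
      simp only [comap_adj, Function.Embedding.coe_subtype]
      exact h a ha w (by exact_mod_cast hw) hne')

/-- Master connectivity lemma: blob(s) + interval sets are connected. -/
lemma connected_master (hn : 5 ≤ n) (s : Finset (Fin n)) (l r : ℕ)
    (h2l : 2 ≤ l) (hlr : l ≤ r) (hr3 : r ≤ n - 3)
    (hP : ∀ w : Fin n, l ≤ (w : ℕ) → (w : ℕ) ≤ r → w ∈ s)
    (hother : ∀ x ∈ s, ((x : ℕ) ≤ 1 ∧ l = 2) ∨ (l ≤ (x : ℕ) ∧ (x : ℕ) ≤ r) ∨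
      (n - 2 ≤ (x : ℕ) ∧ r = n - 3)) :
    ((Lgraph n).induce (↑s : Set (Fin n))).Connected := by
  have hln : l < n := by omega
  set base : Fin n := ⟨l, hln⟩ with hbase
  have hbv : (base : ℕ) = l := rfl
  have hbs : base ∈ s := hP base (by omega) (by omega)
  rw [connected_iff_exists_forall_reachable]
  refine ⟨⟨base, hbs⟩, ?_⟩
  rintro ⟨w, hw⟩
  have hws : w ∈ s := by exact_mod_cast hw
  rcases hother w hws with ⟨hw1, hl2⟩ | ⟨hwl, hwr⟩ | ⟨hwn, hrn⟩
  · -- left blob vertex, adjacent to base (= vertex 2)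
    refine Adj.reachable ?_
    simp only [comap_adj, Function.Embedding.coe_subtype]
    rw [lgraph_adj]
    refine ⟨by omega, Or.inr ?_⟩
    unfold rel
    omega
  · -- path vertex
    exact reach_path hn s ((w : ℕ) - l) base w hbs hws (by omega) (by omega) (by omega)
      (fun z hz1 hz2 => hP z (by omega) (by omega))
  · -- right blob vertex: go to n-3 then one edge
    have hm3 : n - 3 < n := by omega
    have hm3v : ((⟨n - 3, hm3⟩ : Fin n) : ℕ) = n - 3 := rfl
    have hm3s : (⟨n - 3, hm3⟩ : Fin n) ∈ s := hP _ (by omega) (by omega)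
    refine Reachable.trans (reach_path hn s (n - 3 - l) base ⟨n - 3, hm3⟩ hbs hm3s
      (by omega) (by omega) (by omega) (fun z hz1 hz2 => hP z (by omega) (by omega))) (Adj.reachable ?_)
    simp only [comap_adj, Function.Embedding.coe_subtype]
    rw [lgraph_adj]
    refine ⟨by omega, Or.inl ?_⟩
    unfold rel
    have hwn' : (w : ℕ) < n := w.2
    omega


/-! ### The five families -/

def bL (n : ℕ) (hn : 5 ≤ n) : Finset (Finset (Fin n)) :=
  (({⟨0, by omega⟩, ⟨1, by omega⟩} : Finset (Fin n)).powerset).erase ∅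

def bR (n : ℕ) (hn : 5 ≤ n) : Finset (Finset (Fin n)) :=
  (({⟨n - 2, by omega⟩, ⟨n - 1, by omega⟩} : Finset (Fin n)).powerset).erase ∅

def pathI (n : ℕ) (hn : 5 ≤ n) : Finset (Fin n) :=
  Finset.Icc ⟨2, by omega⟩ ⟨n - 3, by omega⟩

def C1 (n : ℕ) (hn : 5 ≤ n) : Finset (Finset (Fin n)) := bL n hn ∪ bR n hn

def C2 (n : ℕ) (hn : 5 ≤ n) : Finset (Finset (Fin n)) :=
  ((bL n hn) ×ˢ (pathI n hn)).image (fun p => p.1 ∪ Finset.Icc ⟨2, by omega⟩ p.2)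

def C3 (n : ℕ) (hn : 5 ≤ n) : Finset (Finset (Fin n)) :=
  ((pathI n hn) ×ˢ (bR n hn)).image (fun p => Finset.Icc p.1 ⟨n - 3, by omega⟩ ∪ p.2)

def C4 (n : ℕ) (hn : 5 ≤ n) : Finset (Finset (Fin n)) :=
  ((bL n hn) ×ˢ (bR n hn)).image (fun p => p.1 ∪ pathI n hn ∪ p.2)

def C5 (n : ℕ) (hn : 5 ≤ n) : Finset (Finset (Fin n)) :=
  (((pathI n hn) ×ˢ (pathI n hn)).filter (fun p => p.1 ≤ p.2)).image
    (fun p => Finset.Icc p.1 p.2)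

/-! ### Basic specs -/

lemma mem_Icc_val {a b x : Fin n} : x ∈ Finset.Icc a b ↔ (a : ℕ) ≤ (x : ℕ) ∧ (x : ℕ) ≤ (b : ℕ) := by
  rw [Finset.mem_Icc, Fin.le_def, Fin.le_def]

lemma mem_bL (hn : 5 ≤ n) {A : Finset (Fin n)} :
    A ∈ bL n hn ↔ A.Nonempty ∧ ∀ x ∈ A, (x : ℕ) ≤ 1 := by
  rw [bL, Finset.mem_erase, Finset.mem_powerset]
  constructor
  · rintro ⟨h1, h2⟩
    refine ⟨Finset.nonempty_of_ne_empty h1, fun x hx => ?_⟩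
    have := h2 hx
    simp only [Finset.mem_insert, Finset.mem_singleton] at this
    rcases this with rfl | rfl
    · exact Nat.zero_le 1
    · exact Nat.le_refl 1
  · rintro ⟨h1, h2⟩
    refine ⟨h1.ne_empty, fun x hx => ?_⟩
    have hx1 := h2 x hx
    simp only [Finset.mem_insert, Finset.mem_singleton, Fin.ext_iff]
    omega

lemma mem_bR (hn : 5 ≤ n) {A : Finset (Fin n)} :
    A ∈ bR n hn ↔ A.Nonempty ∧ ∀ x ∈ A, n - 2 ≤ (x : ℕ) := by
  rw [bR, Finset.mem_erase, Finset.mem_powerset]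
  constructor
  · rintro ⟨h1, h2⟩
    refine ⟨Finset.nonempty_of_ne_empty h1, fun x hx => ?_⟩
    have := h2 hx
    simp only [Finset.mem_insert, Finset.mem_singleton] at this
    rcases this with rfl | rfl
    · exact Nat.le_refl _
    · exact (by omega : n - 2 ≤ n - 1)
  · rintro ⟨h1, h2⟩
    refine ⟨h1.ne_empty, fun x hx => ?_⟩
    have hx1 := h2 x hx
    have hx2 := x.2
    simp only [Finset.mem_insert, Finset.mem_singleton, Fin.ext_iff]
    omega

lemma mem_pathI (hn : 5 ≤ n) {x : Fin n} :
    x ∈ pathI n hn ↔ 2 ≤ (x : ℕ) ∧ (x : ℕ) ≤ n - 3 := by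
  rw [pathI, mem_Icc_val]

/-! ### Cardinalities -/

lemma card_bL (hn : 5 ≤ n) : (bL n hn).card = 3 := by
  rw [bL, Finset.card_erase_of_mem (by simp), Finset.card_powerset,
    Finset.card_insert_of_notMem (by simp [Fin.ext_iff]), Finset.card_singleton]
  norm_num

lemma card_bR (hn : 5 ≤ n) : (bR n hn).card = 3 := by
  rw [bR, Finset.card_erase_of_mem (by simp), Finset.card_powerset,
    Finset.card_insert_of_notMem (by simp [Fin.ext_iff]; omega), Finset.card_singleton]
  norm_num

lemma card_pathI (hn : 5 ≤ n) : (pathI n hn).card = n - 4 := by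
  rw [pathI, Fin.card_Icc]
  simp
  omega

lemma two_mul_card_filter_le {α : Type*} [LinearOrder α] [DecidableEq α] (s : Finset α) :
    2 * ((s ×ˢ s).filter fun p => p.1 ≤ p.2).card = s.card * s.card + s.card := by
  have hswap : ((s ×ˢ s).filter fun p => p.1 ≤ p.2).card
      = ((s ×ˢ s).filter fun p => p.2 ≤ p.1).card := by
    refine Finset.card_bij' (fun p _ => (p.2, p.1)) (fun p _ => (p.2, p.1)) ?_ ?_ ?_ ?_
    · intro p hp
      simp only [Finset.mem_filter, Finset.mem_product] at hp ⊢
      tauto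
    · intro p hp
      simp only [Finset.mem_filter, Finset.mem_product] at hp ⊢
      tauto
    · intro p _; rfl
    · intro p _; rfl
  have hunion : ((s ×ˢ s).filter fun p => p.1 ≤ p.2) ∪ ((s ×ˢ s).filter fun p => p.2 ≤ p.1)
      = s ×ˢ s := by
    ext p
    simp only [Finset.mem_union, Finset.mem_filter, Finset.mem_product]
    rcases le_total p.1 p.2 with h | h <;> tauto
  have hinter : ((s ×ˢ s).filter fun p => p.1 ≤ p.2) ∩ ((s ×ˢ s).filter fun p => p.2 ≤ p.1)
      = (s ×ˢ s).filter fun p => p.1 = p.2 := by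
    ext p
    simp only [Finset.mem_inter, Finset.mem_filter, Finset.mem_product]
    constructor
    · rintro ⟨⟨h1, h2⟩, ⟨h3, h4⟩⟩
      exact ⟨h1, le_antisymm h2 h4⟩
    · rintro ⟨h1, h2⟩
      exact ⟨⟨h1, le_of_eq h2⟩, ⟨h1, ge_of_eq h2⟩⟩
  have hdiag : ((s ×ˢ s).filter fun p => p.1 = p.2).card = s.card := by
    have himg : ((s ×ˢ s).filter fun p => p.1 = p.2) = s.image (fun a => (a, a)) := by
      ext p
      constructor
      · intro hp
        rw [Finset.mem_filter, Finset.mem_product] at hp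
        rw [Finset.mem_image]
        exact ⟨p.1, hp.1.1, by rw [Prod.ext_iff]; exact ⟨rfl, hp.2⟩⟩
      · intro hp
        rw [Finset.mem_image] at hp
        obtain ⟨a, ha, rfl⟩ := hp
        rw [Finset.mem_filter, Finset.mem_product]
        exact ⟨⟨ha, ha⟩, rfl⟩
    rw [himg, Finset.card_image_of_injective _ (fun a b h => (Prod.ext_iff.mp h).1)]
  have hcard := Finset.card_union_add_card_inter
    ((s ×ˢ s).filter fun p => p.1 ≤ p.2) ((s ×ˢ s).filter fun p => p.2 ≤ p.1)
  rw [hunion, hinter, hdiag, Finset.card_product] at hcard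
  omega


/-! ### value-level helpers -/

lemma vmk {k : ℕ} (h : k < n) : ((⟨k, h⟩ : Fin n) : ℕ) = k := rfl

lemma mem_Icc2_val {h2 : 2 < n} {r x : Fin n} :
    x ∈ Finset.Icc (⟨2, h2⟩ : Fin n) r ↔ 2 ≤ (x : ℕ) ∧ (x : ℕ) ≤ (r : ℕ) := mem_Icc_val

lemma mem_Icc3_val {h3 : n - 3 < n} {l x : Fin n} :
    x ∈ Finset.Icc l (⟨n - 3, h3⟩ : Fin n) ↔ (l : ℕ) ≤ (x : ℕ) ∧ (x : ℕ) ≤ n - 3 := mem_Icc_val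

/-! ### Signatures -/

lemma sigC1 (hn : 5 ≤ n) {t : Finset (Fin n)} (ht : t ∈ C1 n hn) :
    t.Nonempty ∧ ¬ ∃ p ∈ t, 2 ≤ (p : ℕ) ∧ (p : ℕ) ≤ n - 3 := by
  rw [C1, Finset.mem_union] at ht
  rcases ht with ht | ht
  · obtain ⟨h1, h2⟩ := (mem_bL hn).mp ht
    exact ⟨h1, fun ⟨p, hp, h3, _⟩ => by have := h2 p hp; omega⟩
  · obtain ⟨h1, h2⟩ := (mem_bR hn).mp ht
    exact ⟨h1, fun ⟨p, hp, _, h4⟩ => by have := h2 p hp; omega⟩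

lemma sigC2 (hn : 5 ≤ n) {t : Finset (Fin n)} (ht : t ∈ C2 n hn) :
    (∃ x ∈ t, (x : ℕ) ≤ 1) ∧ (∃ p ∈ t, 2 ≤ (p : ℕ) ∧ (p : ℕ) ≤ n - 3) ∧
      ¬ ∃ x ∈ t, n - 2 ≤ (x : ℕ) := by
  rw [C2] at ht
  obtain ⟨⟨A, r⟩, hmem, rfl⟩ := Finset.mem_image.mp ht
  rw [Finset.mem_product] at hmem
  obtain ⟨hA, hr⟩ := hmem
  obtain ⟨⟨a, ha⟩, hA1⟩ := (mem_bL hn).mp hA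
  obtain ⟨hr1, hr2⟩ := (mem_pathI hn).mp hr
  refine ⟨⟨a, Finset.mem_union_left _ ha, hA1 a ha⟩, ?_, ?_⟩
  · refine ⟨⟨2, by omega⟩, Finset.mem_union_right _ (mem_Icc2_val.mpr ⟨?_, ?_⟩), ?_, ?_⟩
    · rw [vmk]
    · rw [vmk]; exact hr1
    · rw [vmk]
    · rw [vmk]; omega
  · rintro ⟨x, hx, hx2⟩
    rcases Finset.mem_union.mp hx with h | h
    · have := hA1 x h; omega
    · have := (mem_Icc2_val.mp h).2; omega

lemma sigC3 (hn : 5 ≤ n) {t : Finset (Fin n)} (ht : t ∈ C3 n hn) :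
    (∃ x ∈ t, n - 2 ≤ (x : ℕ)) ∧ (∃ p ∈ t, 2 ≤ (p : ℕ) ∧ (p : ℕ) ≤ n - 3) ∧
      ¬ ∃ x ∈ t, (x : ℕ) ≤ 1 := by
  rw [C3] at ht
  obtain ⟨⟨l, B⟩, hmem, rfl⟩ := Finset.mem_image.mp ht
  rw [Finset.mem_product] at hmem
  obtain ⟨hl, hB⟩ := hmem
  obtain ⟨⟨b, hb⟩, hB1⟩ := (mem_bR hn).mp hB
  obtain ⟨hl1, hl2⟩ := (mem_pathI hn).mp hl
  refine ⟨⟨b, Finset.mem_union_right _ hb, hB1 b hb⟩, ?_, ?_⟩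
  · exact ⟨l, Finset.mem_union_left _ (mem_Icc3_val.mpr ⟨le_refl _, hl2⟩), hl1, hl2⟩
  · rintro ⟨x, hx, hx2⟩
    rcases Finset.mem_union.mp hx with h | h
    · have h' := (mem_Icc3_val.mp h).1; omega
    · have := hB1 x h; omega

lemma sigC4 (hn : 5 ≤ n) {t : Finset (Fin n)} (ht : t ∈ C4 n hn) :
    (∃ x ∈ t, (x : ℕ) ≤ 1) ∧ (∃ p ∈ t, 2 ≤ (p : ℕ) ∧ (p : ℕ) ≤ n - 3) ∧
      ∃ x ∈ t, n - 2 ≤ (x : ℕ) := by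
  rw [C4] at ht
  obtain ⟨⟨A, B⟩, hmem, rfl⟩ := Finset.mem_image.mp ht
  rw [Finset.mem_product] at hmem
  obtain ⟨hA, hB⟩ := hmem
  obtain ⟨⟨a, ha⟩, hA1⟩ := (mem_bL hn).mp hA
  obtain ⟨⟨b, hb⟩, hB1⟩ := (mem_bR hn).mp hB
  refine ⟨⟨a, ?_, hA1 a ha⟩, ⟨⟨2, by omega⟩, ?_, by rw [vmk], by rw [vmk]; omega⟩,
    ⟨b, ?_, hB1 b hb⟩⟩
  · exact Finset.mem_union_left _ (Finset.mem_union_left _ ha)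
  · refine Finset.mem_union_left _ (Finset.mem_union_right _ ((mem_pathI hn).mpr ⟨?_, ?_⟩))
    · rw [vmk]
    · rw [vmk]; omega
  · exact Finset.mem_union_right _ hb

lemma sigC5 (hn : 5 ≤ n) {t : Finset (Fin n)} (ht : t ∈ C5 n hn) :
    (∃ p ∈ t, 2 ≤ (p : ℕ) ∧ (p : ℕ) ≤ n - 3) ∧ (¬ ∃ x ∈ t, (x : ℕ) ≤ 1) ∧
      ¬ ∃ x ∈ t, n - 2 ≤ (x : ℕ) := by
  rw [C5] at ht
  obtain ⟨⟨l, r⟩, hmem, rfl⟩ := Finset.mem_image.mp ht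
  rw [Finset.mem_filter, Finset.mem_product] at hmem
  obtain ⟨⟨hl, hr⟩, hlr⟩ := hmem
  obtain ⟨hl1, hl2⟩ := (mem_pathI hn).mp hl
  obtain ⟨hr1, hr2⟩ := (mem_pathI hn).mp hr
  have hlr' : (l : ℕ) ≤ (r : ℕ) := hlr
  refine ⟨⟨l, mem_Icc_val.mpr ⟨le_refl _, hlr'⟩, hl1, hl2⟩, ?_, ?_⟩
  · rintro ⟨x, hx, hx2⟩
    have := (mem_Icc_val.mp hx).1; omega
  · rintro ⟨x, hx, hx2⟩
    have := (mem_Icc_val.mp hx).2; omega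

/-! ### Cardinalities of the families -/

lemma card_C1 (hn : 5 ≤ n) : (C1 n hn).card = 6 := by
  rw [C1, Finset.card_union_of_disjoint, card_bL, card_bR]
  rw [Finset.disjoint_left]
  intro A hA hA'
  obtain ⟨⟨a, ha⟩, h1⟩ := (mem_bL hn).mp hA
  have h2 := ((mem_bR hn).mp hA').2 a ha
  have := h1 a ha
  omega

lemma card_C2 (hn : 5 ≤ n) : (C2 n hn).card = 3 * (n - 4) := by
  rw [C2, Finset.card_image_of_injOn, Finset.card_product, card_bL hn, card_pathI hn]
  rintro ⟨A, r⟩ hp ⟨A', r'⟩ hq h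
  simp only [Finset.coe_product, Set.mem_prod, Finset.mem_coe] at hp hq
  obtain ⟨hA, hr⟩ := hp
  obtain ⟨hA', hr'⟩ := hq
  have hA1 := ((mem_bL hn).mp hA).2
  have hA1' := ((mem_bL hn).mp hA').2
  obtain ⟨hr1, hr2⟩ := (mem_pathI hn).mp hr
  obtain ⟨hr1', hr2'⟩ := (mem_pathI hn).mp hr'
  simp only at h
  have hAeq : A = A' := by
    ext x
    constructor
    · intro hx
      have hx1 := hA1 x hx
      have h2 : x ∈ A' ∪ Finset.Icc ⟨2, by omega⟩ r' := h ▸ Finset.mem_union_left _ hx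
      rcases Finset.mem_union.mp h2 with h' | h'
      · exact h'
      · have := (mem_Icc2_val.mp h').1; omega
    · intro hx
      have hx1 := hA1' x hx
      have h2 : x ∈ A ∪ Finset.Icc ⟨2, by omega⟩ r := h.symm ▸ Finset.mem_union_left _ hx
      rcases Finset.mem_union.mp h2 with h' | h'
      · exact h'
      · have := (mem_Icc2_val.mp h').1; omega
  have hreq : r = r' := by
    have hrm : r ∈ A' ∪ Finset.Icc ⟨2, by omega⟩ r' :=
      h ▸ Finset.mem_union_right _ (mem_Icc2_val.mpr ⟨hr1, le_refl _⟩)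
    have hrm' : r' ∈ A ∪ Finset.Icc ⟨2, by omega⟩ r :=
      h.symm ▸ Finset.mem_union_right _ (mem_Icc2_val.mpr ⟨hr1', le_refl _⟩)
    have h1 : (r : ℕ) ≤ (r' : ℕ) := by
      rcases Finset.mem_union.mp hrm with h' | h'
      · have := hA1' r h'; omega
      · exact (mem_Icc2_val.mp h').2
    have h2 : (r' : ℕ) ≤ (r : ℕ) := by
      rcases Finset.mem_union.mp hrm' with h' | h'
      · have := hA1 r' h'; omega
      · exact (mem_Icc2_val.mp h').2
    exact Fin.ext (le_antisymm h1 h2)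
  rw [Prod.ext_iff]
  exact ⟨hAeq, hreq⟩

lemma card_C3 (hn : 5 ≤ n) : (C3 n hn).card = (n - 4) * 3 := by
  rw [C3, Finset.card_image_of_injOn, Finset.card_product, card_bR hn, card_pathI hn]
  rintro ⟨l, B⟩ hp ⟨l', B'⟩ hq h
  simp only [Finset.coe_product, Set.mem_prod, Finset.mem_coe] at hp hq
  obtain ⟨hl, hB⟩ := hp
  obtain ⟨hl', hB'⟩ := hq
  have hB1 := ((mem_bR hn).mp hB).2
  have hB1' := ((mem_bR hn).mp hB').2
  obtain ⟨hl1, hl2⟩ := (mem_pathI hn).mp hl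
  obtain ⟨hl1', hl2'⟩ := (mem_pathI hn).mp hl'
  simp only at h
  have hBeq : B = B' := by
    ext x
    constructor
    · intro hx
      have hx1 := hB1 x hx
      have h2 : x ∈ Finset.Icc l' ⟨n - 3, by omega⟩ ∪ B' := h ▸ Finset.mem_union_right _ hx
      rcases Finset.mem_union.mp h2 with h' | h'
      · have := (mem_Icc3_val.mp h').2; omega
      · exact h'
    · intro hx
      have hx1 := hB1' x hx
      have h2 : x ∈ Finset.Icc l ⟨n - 3, by omega⟩ ∪ B := h.symm ▸ Finset.mem_union_right _ hx
      rcases Finset.mem_union.mp h2 with h' | h'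
      · have := (mem_Icc3_val.mp h').2; omega
      · exact h'
  have hleq : l = l' := by
    have hlm : l ∈ Finset.Icc l' ⟨n - 3, by omega⟩ ∪ B' :=
      h ▸ Finset.mem_union_left _ (mem_Icc3_val.mpr ⟨le_refl _, hl2⟩)
    have hlm' : l' ∈ Finset.Icc l ⟨n - 3, by omega⟩ ∪ B :=
      h.symm ▸ Finset.mem_union_left _ (mem_Icc3_val.mpr ⟨le_refl _, hl2'⟩)
    have h1 : (l' : ℕ) ≤ (l : ℕ) := by
      rcases Finset.mem_union.mp hlm with h' | h'
      · exact (mem_Icc3_val.mp h').1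
      · have := hB1' l h'; omega
    have h2 : (l : ℕ) ≤ (l' : ℕ) := by
      rcases Finset.mem_union.mp hlm' with h' | h'
      · exact (mem_Icc3_val.mp h').1
      · have := hB1 l' h'; omega
    exact Fin.ext (le_antisymm h2 h1)
  rw [Prod.ext_iff]
  exact ⟨hleq, hBeq⟩

lemma card_C4 (hn : 5 ≤ n) : (C4 n hn).card = 9 := by
  rw [C4, Finset.card_image_of_injOn, Finset.card_product, card_bL hn, card_bR hn]
  rintro ⟨A, B⟩ hp ⟨A', B'⟩ hq h
  simp only [Finset.coe_product, Set.mem_prod, Finset.mem_coe] at hp hq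
  obtain ⟨hA, hB⟩ := hp
  obtain ⟨hA', hB'⟩ := hq
  have hA1 := ((mem_bL hn).mp hA).2
  have hA1' := ((mem_bL hn).mp hA').2
  have hB1 := ((mem_bR hn).mp hB).2
  have hB1' := ((mem_bR hn).mp hB').2
  simp only at h
  have hpath : ∀ x : Fin n, x ∈ pathI n hn → 2 ≤ (x : ℕ) ∧ (x : ℕ) ≤ n - 3 :=
    fun x hx => (mem_pathI hn).mp hx
  have hAeq : A = A' := by
    ext x
    constructor
    · intro hx
      have hx1 := hA1 x hx
      have h2 : x ∈ A' ∪ pathI n hn ∪ B' :=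
        h ▸ Finset.mem_union_left _ (Finset.mem_union_left _ hx)
      rcases Finset.mem_union.mp h2 with h' | h'
      · rcases Finset.mem_union.mp h' with h'' | h''
        · exact h''
        · have := hpath x h''; omega
      · have := hB1' x h'; omega
    · intro hx
      have hx1 := hA1' x hx
      have h2 : x ∈ A ∪ pathI n hn ∪ B :=
        h.symm ▸ Finset.mem_union_left _ (Finset.mem_union_left _ hx)
      rcases Finset.mem_union.mp h2 with h' | h'
      · rcases Finset.mem_union.mp h' with h'' | h''
        · exact h''
        · have := hpath x h''; omega
      · have := hB1 x h'; omega
  have hBeq : B = B' := by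
    ext x
    constructor
    · intro hx
      have hx1 := hB1 x hx
      have h2 : x ∈ A' ∪ pathI n hn ∪ B' := h ▸ Finset.mem_union_right _ hx
      rcases Finset.mem_union.mp h2 with h' | h'
      · rcases Finset.mem_union.mp h' with h'' | h''
        · have := hA1' x h''; omega
        · have := hpath x h''; omega
      · exact h'
    · intro hx
      have hx1 := hB1' x hx
      have h2 : x ∈ A ∪ pathI n hn ∪ B := h.symm ▸ Finset.mem_union_right _ hx
      rcases Finset.mem_union.mp h2 with h' | h'
      · rcases Finset.mem_union.mp h' with h'' | h''
        · have := hA1 x h''; omega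
        · have := hpath x h''; omega
      · exact h'
  rw [Prod.ext_iff]
  exact ⟨hAeq, hBeq⟩

lemma card_C5 (hn : 5 ≤ n) : 2 * (C5 n hn).card = (n - 4) * (n - 4) + (n - 4) := by
  rw [C5, Finset.card_image_of_injOn]
  · rw [← card_pathI hn]
    exact two_mul_card_filter_le (pathI n hn)
  rintro ⟨l, r⟩ hp ⟨l', r'⟩ hq h
  simp only [Finset.coe_filter, Set.mem_setOf_eq, Finset.mem_product] at hp hq
  obtain ⟨⟨hl, hr⟩, hlr⟩ := hp
  obtain ⟨⟨hl', hr'⟩, hlr'⟩ := hq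
  simp only at h hlr hlr'
  have h1 : l ∈ Finset.Icc l' r' := h ▸ Finset.mem_Icc.mpr ⟨le_refl _, hlr⟩
  have h2 : l' ∈ Finset.Icc l r := h.symm ▸ Finset.mem_Icc.mpr ⟨le_refl _, hlr'⟩
  have h3 : r ∈ Finset.Icc l' r' := h ▸ Finset.mem_Icc.mpr ⟨hlr, le_refl _⟩
  have h4 : r' ∈ Finset.Icc l r := h.symm ▸ Finset.mem_Icc.mpr ⟨hlr', le_refl _⟩
  rw [Finset.mem_Icc] at h1 h2 h3 h4
  rw [Prod.ext_iff]
  exact ⟨le_antisymm (h2.1) (h1.1), le_antisymm (h3.2) (h4.2)⟩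


/-! ### Backward: members of the families are connected -/

set_option maxHeartbeats 2000000 in
lemma conn_of_mem (hn : 5 ≤ n) {t : Finset (Fin n)}
    (ht : t ∈ C1 n hn ∪ C2 n hn ∪ C3 n hn ∪ C4 n hn ∪ C5 n hn) :
    ((Lgraph n).induce (↑t : Set (Fin n))).Connected := by
  simp only [Finset.mem_union] at ht
  rcases ht with ((((ht1 | ht2) | ht3) | ht4) | ht5)
  · -- C1
    rw [C1, Finset.mem_union] at ht1
    rcases ht1 with h | h
    · obtain ⟨hne, hval⟩ := (mem_bL hn).mp h
      clear h
      refine connected_of_clique t hne ?_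
      intro x hx y hy hxy
      have h1 := hval x hx
      have h2 := hval y hy
      have h3 : (x : ℕ) ≠ (y : ℕ) := fun he => hxy (Fin.ext he)
      rw [lgraph_adj]
      refine ⟨h3, ?_⟩
      unfold rel
      have hcase : ((x : ℕ) = 0 ∧ (y : ℕ) = 1) ∨ ((x : ℕ) = 1 ∧ (y : ℕ) = 0) := by omega
      rcases hcase with ⟨ha, hb⟩ | ⟨ha, hb⟩
      · exact Or.inl (Or.inl ⟨ha, hb⟩)
      · exact Or.inr (Or.inl ⟨hb, ha⟩)
    · obtain ⟨hne, hval⟩ := (mem_bR hn).mp h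
      clear h
      refine connected_of_clique t hne ?_
      intro x hx y hy hxy
      have h1 := hval x hx
      have h2 := hval y hy
      have h3 : (x : ℕ) ≠ (y : ℕ) := fun he => hxy (Fin.ext he)
      have h4 := x.2
      have h5 := y.2
      rw [lgraph_adj]
      refine ⟨h3, ?_⟩
      unfold rel
      have hcase : ((x : ℕ) = n - 2 ∧ (y : ℕ) = n - 1) ∨ ((x : ℕ) = n - 1 ∧ (y : ℕ) = n - 2) := by
        omega
      rcases hcase with ⟨ha, hb⟩ | ⟨ha, hb⟩
      · exact Or.inl (Or.inr (Or.inr (Or.inr (Or.inr (Or.inr (Or.inr ⟨ha, hb⟩))))))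
      · exact Or.inr (Or.inr (Or.inr (Or.inr (Or.inr (Or.inr (Or.inr ⟨hb, ha⟩))))))
  · -- C2
    rw [C2] at ht2
    obtain ⟨⟨A, r⟩, hmem, rfl⟩ := Finset.mem_image.mp ht2
    clear ht2
    rw [Finset.mem_product] at hmem
    obtain ⟨hA, hr⟩ := hmem
    have hA1 := ((mem_bL hn).mp hA).2
    obtain ⟨hr1, hr2⟩ := (mem_pathI hn).mp hr
    refine connected_master hn _ 2 (r : ℕ) (le_refl _) hr1 hr2 ?_ ?_
    · intro w h1 h2
      exact Finset.mem_union_right _ (mem_Icc2_val.mpr ⟨h1, h2⟩)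
    · intro x hx
      rcases Finset.mem_union.mp hx with h | h
      · exact Or.inl ⟨hA1 x h, rfl⟩
      · exact Or.inr (Or.inl (mem_Icc2_val.mp h))
  · -- C3
    rw [C3] at ht3
    obtain ⟨⟨l, B⟩, hmem, rfl⟩ := Finset.mem_image.mp ht3
    clear ht3
    rw [Finset.mem_product] at hmem
    obtain ⟨hl, hB⟩ := hmem
    have hB1 := ((mem_bR hn).mp hB).2
    obtain ⟨hl1, hl2⟩ := (mem_pathI hn).mp hl
    refine connected_master hn _ (l : ℕ) (n - 3) hl1 hl2 (le_refl _) ?_ ?_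
    · intro w h1 h2
      exact Finset.mem_union_left _ (mem_Icc3_val.mpr ⟨h1, h2⟩)
    · intro x hx
      rcases Finset.mem_union.mp hx with h | h
      · exact Or.inr (Or.inl (mem_Icc3_val.mp h))
      · exact Or.inr (Or.inr ⟨hB1 x h, rfl⟩)
  · -- C4
    rw [C4] at ht4
    obtain ⟨⟨A, B⟩, hmem, rfl⟩ := Finset.mem_image.mp ht4
    clear ht4
    rw [Finset.mem_product] at hmem
    obtain ⟨hA, hB⟩ := hmem
    have hA1 := ((mem_bL hn).mp hA).2
    have hB1 := ((mem_bR hn).mp hB).2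
    refine connected_master hn _ 2 (n - 3) (le_refl _) (by omega) (le_refl _) ?_ ?_
    · intro w h1 h2
      exact Finset.mem_union_left _ (Finset.mem_union_right _ ((mem_pathI hn).mpr ⟨h1, h2⟩))
    · intro x hx
      rcases Finset.mem_union.mp hx with h | h
      · rcases Finset.mem_union.mp h with h' | h'
        · exact Or.inl ⟨hA1 x h', rfl⟩
        · exact Or.inr (Or.inl ((mem_pathI hn).mp h'))
      · exact Or.inr (Or.inr ⟨hB1 x h, rfl⟩)
  · -- C5
    rw [C5] at ht5
    obtain ⟨⟨l, r⟩, hmem, rfl⟩ := Finset.mem_image.mp ht5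
    clear ht5
    rw [Finset.mem_filter, Finset.mem_product] at hmem
    obtain ⟨⟨hl, hr⟩, hlr⟩ := hmem
    obtain ⟨hl1, hl2⟩ := (mem_pathI hn).mp hl
    obtain ⟨hr1, hr2⟩ := (mem_pathI hn).mp hr
    have hlr' : (l : ℕ) ≤ (r : ℕ) := hlr
    refine connected_master hn _ (l : ℕ) (r : ℕ) hl1 hlr' hr2 ?_ ?_
    · intro w h1 h2
      exact mem_Icc_val.mpr ⟨h1, h2⟩
    · intro x hx
      exact Or.inr (Or.inl (mem_Icc_val.mp hx))

/-! ### Forward: connected sets belong to the families -/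

set_option maxHeartbeats 2000000 in
lemma mem_of_conn (hn : 5 ≤ n) {s : Finset (Fin n)}
    (hc : ((Lgraph n).induce (↑s : Set (Fin n))).Connected) :
    s ∈ C1 n hn ∪ C2 n hn ∪ C3 n hn ∪ C4 n hn ∪ C5 n hn := by
  classical
  have hne : s.Nonempty := by
    obtain ⟨⟨x, hx⟩⟩ := hc.nonempty
    exact ⟨x, by exact_mod_cast hx⟩
  by_cases hP : ∃ p ∈ s, 2 ≤ (p : ℕ) ∧ (p : ℕ) ≤ n - 3
  · set P := s.filter (fun x : Fin n => 2 ≤ (x : ℕ) ∧ (x : ℕ) ≤ n - 3) with hPdef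
    have hPne : P.Nonempty := by
      obtain ⟨p, hp, h⟩ := hP
      exact ⟨p, Finset.mem_filter.mpr ⟨hp, h⟩⟩
    set l := P.min' hPne with hldef
    set r := P.max' hPne with hrdef
    have hlP : l ∈ P := P.min'_mem hPne
    have hrP : r ∈ P := P.max'_mem hPne
    have hls : l ∈ s := (Finset.mem_filter.mp hlP).1
    have hrs : r ∈ s := (Finset.mem_filter.mp hrP).1
    have hl2 : 2 ≤ (l : ℕ) := (Finset.mem_filter.mp hlP).2.1
    have hl3 : (l : ℕ) ≤ n - 3 := (Finset.mem_filter.mp hlP).2.2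
    have hr2 : 2 ≤ (r : ℕ) := (Finset.mem_filter.mp hrP).2.1
    have hr3 : (r : ℕ) ≤ n - 3 := (Finset.mem_filter.mp hrP).2.2
    have hPIcc : P = Finset.Icc l r := by
      ext x
      rw [Finset.mem_Icc]
      constructor
      · intro hx
        exact ⟨P.min'_le x hx, P.le_max' x hx⟩
      · rintro ⟨h1, h2⟩
        have h1' : (l : ℕ) ≤ (x : ℕ) := h1
        have h2' : (x : ℕ) ≤ (r : ℕ) := h2
        exact Finset.mem_filter.mpr
          ⟨struct1 hn hc l x r hls hrs hl2 h1' h2' hr3, by omega, by omega⟩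
    have hPsub : P ⊆ s := Finset.filter_subset _ _
    by_cases hL : ∃ a ∈ s, (a : ℕ) ≤ 1 <;> by_cases hR : ∃ b ∈ s, n - 2 ≤ (b : ℕ)
    · -- both blobs: C4
      set A := s.filter (fun x : Fin n => (x : ℕ) ≤ 1) with hAdef
      set B := s.filter (fun x : Fin n => n - 2 ≤ (x : ℕ)) with hBdef
      have hAbL : A ∈ bL n hn := by
        rw [mem_bL hn]
        obtain ⟨a, ha, ha1⟩ := hL
        exact ⟨⟨a, Finset.mem_filter.mpr ⟨ha, ha1⟩⟩, fun x hx => (Finset.mem_filter.mp hx).2⟩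
      have hBbR : B ∈ bR n hn := by
        rw [mem_bR hn]
        obtain ⟨b, hb, hb1⟩ := hR
        exact ⟨⟨b, Finset.mem_filter.mpr ⟨hb, hb1⟩⟩, fun x hx => (Finset.mem_filter.mp hx).2⟩
      have h2s := struct2 hn hc hL hP
      have h3s := struct3 hn hc hR hP
      have h2P : (⟨2, by omega⟩ : Fin n) ∈ P :=
        Finset.mem_filter.mpr ⟨h2s, le_refl 2, (by omega : (2 : ℕ) ≤ n - 3)⟩
      have h3P : (⟨n - 3, by omega⟩ : Fin n) ∈ P :=
        Finset.mem_filter.mpr ⟨h3s, (by omega : 2 ≤ n - 3), le_refl (n - 3)⟩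
      have hl' : l = ⟨2, by omega⟩ := by
        have h' : (l : ℕ) ≤ 2 := P.min'_le _ h2P
        exact Fin.ext (show (l : ℕ) = 2 by omega)
      have hr' : r = ⟨n - 3, by omega⟩ := by
        have h' : (n - 3 : ℕ) ≤ (r : ℕ) := P.le_max' _ h3P
        exact Fin.ext (show (r : ℕ) = n - 3 by omega)
      have hPpath : P = pathI n hn := by
        rw [hPIcc, hl', hr', pathI]
      have hdecomp : A ∪ pathI n hn ∪ B = s := by
        ext x
        constructor
        · intro hx
          rcases Finset.mem_union.mp hx with h | h
          · rcases Finset.mem_union.mp h with h' | h'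
            · exact Finset.filter_subset _ _ h'
            · exact hPsub (hPpath ▸ h')
          · exact Finset.filter_subset _ _ h
        · intro hx
          have hxn := x.2
          by_cases h1 : (x : ℕ) ≤ 1
          · exact Finset.mem_union_left _
              (Finset.mem_union_left _ (Finset.mem_filter.mpr ⟨hx, h1⟩))
          by_cases h2 : n - 2 ≤ (x : ℕ)
          · exact Finset.mem_union_right _ (Finset.mem_filter.mpr ⟨hx, h2⟩)
          · refine Finset.mem_union_left _ (Finset.mem_union_right _ ?_)
            rw [← hPpath]
            exact Finset.mem_filter.mpr ⟨hx, by omega, by omega⟩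
      refine Finset.mem_union_left _ (Finset.mem_union_right _ ?_)
      rw [C4, Finset.mem_image]
      exact ⟨(A, B), Finset.mem_product.mpr ⟨hAbL, hBbR⟩, hdecomp⟩
    · -- left blob only: C2
      set A := s.filter (fun x : Fin n => (x : ℕ) ≤ 1) with hAdef
      have hAbL : A ∈ bL n hn := by
        rw [mem_bL hn]
        obtain ⟨a, ha, ha1⟩ := hL
        exact ⟨⟨a, Finset.mem_filter.mpr ⟨ha, ha1⟩⟩, fun x hx => (Finset.mem_filter.mp hx).2⟩
      have h2s := struct2 hn hc hL hP
      have h2P : (⟨2, by omega⟩ : Fin n) ∈ P :=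
        Finset.mem_filter.mpr ⟨h2s, le_refl 2, (by omega : (2 : ℕ) ≤ n - 3)⟩
      have hl' : l = ⟨2, by omega⟩ := by
        have h' : (l : ℕ) ≤ 2 := P.min'_le _ h2P
        exact Fin.ext (show (l : ℕ) = 2 by omega)
      have hdecomp : A ∪ Finset.Icc ⟨2, by omega⟩ r = s := by
        ext x
        constructor
        · intro hx
          rcases Finset.mem_union.mp hx with h | h
          · exact Finset.filter_subset _ _ h
          · exact hPsub (by rw [hPIcc, hl']; exact h)
        · intro hx
          have hxn := x.2
          by_cases h1 : (x : ℕ) ≤ 1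
          · exact Finset.mem_union_left _ (Finset.mem_filter.mpr ⟨hx, h1⟩)
          · have h2 : ¬ n - 2 ≤ (x : ℕ) := fun h => hR ⟨x, hx, h⟩
            refine Finset.mem_union_right _ ?_
            rw [← hl', ← hPIcc]
            exact Finset.mem_filter.mpr ⟨hx, by omega, by omega⟩
      refine Finset.mem_union_left _ (Finset.mem_union_left _ (Finset.mem_union_left _
        (Finset.mem_union_right _ ?_)))
      rw [C2, Finset.mem_image]
      refine ⟨(A, r), Finset.mem_product.mpr ⟨hAbL, (mem_pathI hn).mpr ⟨hr2, hr3⟩⟩, hdecomp⟩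
    · -- right blob only: C3
      set B := s.filter (fun x : Fin n => n - 2 ≤ (x : ℕ)) with hBdef
      have hBbR : B ∈ bR n hn := by
        rw [mem_bR hn]
        obtain ⟨b, hb, hb1⟩ := hR
        exact ⟨⟨b, Finset.mem_filter.mpr ⟨hb, hb1⟩⟩, fun x hx => (Finset.mem_filter.mp hx).2⟩
      have h3s := struct3 hn hc hR hP
      have h3P : (⟨n - 3, by omega⟩ : Fin n) ∈ P :=
        Finset.mem_filter.mpr ⟨h3s, (by omega : 2 ≤ n - 3), le_refl (n - 3)⟩
      have hr' : r = ⟨n - 3, by omega⟩ := by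
        have h' : (n - 3 : ℕ) ≤ (r : ℕ) := P.le_max' _ h3P
        exact Fin.ext (show (r : ℕ) = n - 3 by omega)
      have hdecomp : Finset.Icc l ⟨n - 3, by omega⟩ ∪ B = s := by
        ext x
        constructor
        · intro hx
          rcases Finset.mem_union.mp hx with h | h
          · exact hPsub (by rw [hPIcc, hr']; exact h)
          · exact Finset.filter_subset _ _ h
        · intro hx
          have hxn := x.2
          by_cases h2 : n - 2 ≤ (x : ℕ)
          · exact Finset.mem_union_right _ (Finset.mem_filter.mpr ⟨hx, h2⟩)
          · have h1 : ¬ (x : ℕ) ≤ 1 := fun h => hL ⟨x, hx, h⟩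
            refine Finset.mem_union_left _ ?_
            rw [← hr', ← hPIcc]
            exact Finset.mem_filter.mpr ⟨hx, by omega, by omega⟩
      refine Finset.mem_union_left _ (Finset.mem_union_left _ (Finset.mem_union_right _ ?_))
      rw [C3, Finset.mem_image]
      exact ⟨(l, B), Finset.mem_product.mpr ⟨(mem_pathI hn).mpr ⟨hl2, hl3⟩, hBbR⟩, hdecomp⟩
    · -- no blobs: C5
      have hdecomp : Finset.Icc l r = s := by
        ext x
        constructor
        · intro hx
          exact hPsub (by rw [hPIcc]; exact hx)
        · intro hx
          have hxn := x.2
          have h1 : ¬ (x : ℕ) ≤ 1 := fun h => hL ⟨x, hx, h⟩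
          have h2 : ¬ n - 2 ≤ (x : ℕ) := fun h => hR ⟨x, hx, h⟩
          rw [← hPIcc]
          exact Finset.mem_filter.mpr ⟨hx, by omega, by omega⟩
      refine Finset.mem_union_right _ ?_
      rw [C5, Finset.mem_image]
      refine ⟨(l, r), ?_, hdecomp⟩
      rw [Finset.mem_filter, Finset.mem_product]
      exact ⟨⟨(mem_pathI hn).mpr ⟨hl2, hl3⟩, (mem_pathI hn).mpr ⟨hr2, hr3⟩⟩, P.min'_le _ hrP⟩
  · -- no path vertex: C1
    push_neg at hP
    refine Finset.mem_union_left _ (Finset.mem_union_left _ (Finset.mem_union_left _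
      (Finset.mem_union_left _ ?_)))
    rw [C1, Finset.mem_union]
    by_cases hL : ∃ a ∈ s, (a : ℕ) ≤ 1
    · have hR : ¬ ∃ b ∈ s, n - 2 ≤ (b : ℕ) := by
        rintro ⟨b, hb, hb1⟩
        obtain ⟨p, hp, h1, h2⟩ := struct4 hn hc hL ⟨b, hb, hb1⟩
        have := hP p hp h1
        omega
      left
      rw [mem_bL hn]
      refine ⟨hne, fun x hx => ?_⟩
      have hxn := x.2
      by_cases h1 : 2 ≤ (x : ℕ)
      · have h2 := hP x hx h1
        have h3 : ¬ n - 2 ≤ (x : ℕ) := fun h => hR ⟨x, hx, h⟩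
        omega
      · omega
    · right
      rw [mem_bR hn]
      refine ⟨hne, fun x hx => ?_⟩
      have hxn := x.2
      have h1 : ¬ (x : ℕ) ≤ 1 := fun h => hL ⟨x, hx, h⟩
      have h2 := hP x hx (by omega)
      omega

/-! ### Disjointness and total count -/

lemma card_union_all (hn : 5 ≤ n) :
    (C1 n hn ∪ C2 n hn ∪ C3 n hn ∪ C4 n hn ∪ C5 n hn).card
      = (C1 n hn).card + (C2 n hn).card + (C3 n hn).card + (C4 n hn).card + (C5 n hn).card := by
  have d12 : Disjoint (C1 n hn) (C2 n hn) := by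
    rw [Finset.disjoint_left]; intro t h1 h2
    exact (sigC1 hn h1).2 (sigC2 hn h2).2.1
  have d13 : Disjoint (C1 n hn) (C3 n hn) := by
    rw [Finset.disjoint_left]; intro t h1 h2
    exact (sigC1 hn h1).2 (sigC3 hn h2).2.1
  have d14 : Disjoint (C1 n hn) (C4 n hn) := by
    rw [Finset.disjoint_left]; intro t h1 h2
    exact (sigC1 hn h1).2 (sigC4 hn h2).2.1
  have d15 : Disjoint (C1 n hn) (C5 n hn) := by
    rw [Finset.disjoint_left]; intro t h1 h2
    exact (sigC1 hn h1).2 (sigC5 hn h2).1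
  have d23 : Disjoint (C2 n hn) (C3 n hn) := by
    rw [Finset.disjoint_left]; intro t h1 h2
    exact (sigC2 hn h1).2.2 (sigC3 hn h2).1
  have d24 : Disjoint (C2 n hn) (C4 n hn) := by
    rw [Finset.disjoint_left]; intro t h1 h2
    exact (sigC2 hn h1).2.2 (sigC4 hn h2).2.2
  have d25 : Disjoint (C2 n hn) (C5 n hn) := by
    rw [Finset.disjoint_left]; intro t h1 h2
    exact (sigC5 hn h2).2.1 (sigC2 hn h1).1
  have d34 : Disjoint (C3 n hn) (C4 n hn) := by
    rw [Finset.disjoint_left]; intro t h1 h2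
    exact (sigC3 hn h1).2.2 (sigC4 hn h2).1
  have d35 : Disjoint (C3 n hn) (C5 n hn) := by
    rw [Finset.disjoint_left]; intro t h1 h2
    exact (sigC5 hn h2).2.2 (sigC3 hn h1).1
  have d45 : Disjoint (C4 n hn) (C5 n hn) := by
    rw [Finset.disjoint_left]; intro t h1 h2
    exact (sigC5 hn h2).2.2 (sigC4 hn h1).2.2
  rw [Finset.card_union_of_disjoint (by
    exact Finset.disjoint_union_left.mpr ⟨Finset.disjoint_union_left.mpr
      ⟨Finset.disjoint_union_left.mpr ⟨d15, d25⟩, d35⟩, d45⟩)]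
  rw [Finset.card_union_of_disjoint (by
    exact Finset.disjoint_union_left.mpr ⟨Finset.disjoint_union_left.mpr ⟨d14, d24⟩, d34⟩)]
  rw [Finset.card_union_of_disjoint (Finset.disjoint_union_left.mpr ⟨d13, d23⟩)]
  rw [Finset.card_union_of_disjoint d12]

end LP


set_option maxHeartbeats 1000000 in
theorem numConnSets_Lgraph (n : ℕ) (hn : 5 ≤ n) :
    numConnSets (Lgraph n) = (n + 6) * (n - 1) / 2 := by
  classical
  rw [numConnSets, Nat.card_eq_fintype_card, Fintype.card_subtype]
  have hset : (Finset.univ.filter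
        fun s : Finset (Fin n) => ((Lgraph n).induce (↑s : Set (Fin n))).Connected)
      = LP.C1 n hn ∪ LP.C2 n hn ∪ LP.C3 n hn ∪ LP.C4 n hn ∪ LP.C5 n hn := by
    ext s
    simp only [Finset.mem_filter, Finset.mem_univ, true_and]
    exact ⟨fun h => LP.mem_of_conn hn h, fun h => LP.conn_of_mem hn h⟩
  rw [hset, LP.card_union_all hn, LP.card_C1 hn, LP.card_C2 hn, LP.card_C3 hn, LP.card_C4 hn]
  have h5 := LP.card_C5 hn
  have key : (n + 6) * (n - 1) = 2 * (LP.C5 n hn).card + 12 * (n - 4) + 30 := by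
    obtain ⟨k, rfl⟩ : ∃ k, n = k + 4 := ⟨n - 4, by omega⟩
    rw [h5]
    have e1 : k + 4 + 6 = k + 10 := by omega
    have e2 : k + 4 - 1 = k + 3 := by omega
    have e3 : k + 4 - 4 = k := by omega
    rw [e1, e2, e3]
    ring
  omega
end

section
/- For all n ≥ 4, the graph A_n, obtained from the complete graph K₄ minus one edge by attaching a path P_{n−3} at a vertex of degree 2 (identifying one endvertex of the path with that vertex), satisfies N(A_n) = (n² + 7n − 16)/2. -/
open SimpleGraph

/-!
Deleting the end vertex `v` of the pendant path of `A_{n+1}` leaves `A_n`, so the connected sets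
of `A_{n+1}` are those of `A_n` together with those containing `v`. Since `v` is a leaf, a
connected set through `v` is either `{v}` or `v` added to a connected set through its neighbour,
the end vertex of `A_n`. Hence the number of connected sets through the end vertex grows by one
at each step, equals `n + 3` for `A_n`, and `N(A_n) = N(A_{n-1}) + n + 3` with `N(A_4) = 14`.
-/

open Finset

theorem Finset.natCard_subtype_map {α β : Type*} [Fintype α] (f : α ↪ β)
    (Q : Finset β → Prop) :
    Nat.card {t : Finset α // Q (t.map f)} =
      Nat.card {s : Finset β // ↑s ⊆ Set.range f ∧ Q s} := by
  refine Nat.card_eq_of_bijective (fun t => ⟨t.1.map f, by simp, t.2⟩)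
    ⟨fun t t' h => ?_, ?_⟩
  · exact Subtype.ext (Finset.map_injective f (congrArg Subtype.val h))
  · rintro ⟨s, hs, hQ⟩
    obtain ⟨t, -, rfl⟩ := (subset_map_iff (t := univ)).1 fun x hx => by
      obtain ⟨y, rfl⟩ := hs hx
      exact mem_map_of_mem f (mem_univ y)
    exact ⟨⟨t, hQ⟩, rfl⟩

namespace SimpleGraph

variable {V W : Type*} {G : SimpleGraph V} {H : SimpleGraph W}

noncomputable def Embedding.induceImageIso (f : H ↪g G) (s : Set W) :
    H.induce s ≃g G.induce (f '' s) where
  toEquiv := Equiv.Set.image f s f.injective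
  map_rel_iff' := by simp

theorem connected_induce_insert {s : Set V} {u v : V} (hs : (G.induce s).Connected)
    (hu : u ∈ s) (huv : G.Adj u v) : (G.induce (insert v s)).Connected := by
  rw [← Set.union_singleton]
  exact connected_induce_union hs.preconnected .of_subsingleton hu rfl huv

theorem Preconnected.induce_diff_singleton {s : Set V} {v : V}
    (hs : (G.induce s).Preconnected) (hv : (G.neighborSet v).Subsingleton) :
    (G.induce (s \ {v})).Preconnected := by
  have h := hs.induce_of_degree_eq_one (s := {x | x.1 ≠ v}) fun x hx => by
    obtain rfl : x.1 = v := not_not.1 hx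
    exact hv.preimage Subtype.coe_injective
  have himage : ((↑) : s → V) '' {x | x.1 ≠ v} = s \ {v} := by
    ext; simp [and_comm]
  exact himage ▸ ((Embedding.induce s).induceImageIso _).preconnected_iff.1 h

theorem exists_adj_of_connected_induce {s : Set V} {v x : V} (hs : (G.induce s).Connected)
    (hv : v ∈ s) (hx : x ∈ s) (hxv : x ≠ v) : ∃ y ∈ s, G.Adj v y := by
  obtain ⟨p⟩ := hs.preconnected ⟨v, hv⟩ ⟨x, hx⟩
  cases p with
  | nil => exact absurd rfl hxv
  | cons h _ => exact ⟨_, Subtype.prop _, h⟩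

theorem connected_induce_map_iff (f : H ↪g G) (t : Finset W) :
    (G.induce ↑(t.map f.toEmbedding)).Connected ↔ (H.induce ↑t).Connected := by
  rw [coe_map]
  exact (f.induceImageIso _).connected_iff.symm

theorem natCard_connected_induce_map [Fintype W] (f : H ↪g G) {v : V} (hf : Set.range f = {v}ᶜ)
    (P : Finset V → Prop) :
    Nat.card {t : Finset W // P (t.map f.toEmbedding) ∧ (H.induce ↑t).Connected} =
      Nat.card {s : Finset V // v ∉ s ∧ P s ∧ (G.induce ↑s).Connected} := by
  simp only [← connected_induce_map_iff f]
  rw [Finset.natCard_subtype_map f.toEmbedding (fun s => P s ∧ (G.induce ↑s).Connected)]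
  simp only [RelEmbedding.coe_toEmbedding, hf, Set.subset_compl_singleton_iff, mem_coe]

variable [Fintype V] [Fintype W]

theorem numConnSets_eq_add_numConnSetsAt (f : H ↪g G) {v : V} (hf : Set.range f = {v}ᶜ) :
    numConnSets G = numConnSets H + numConnSetsAt G v := by
  classical
  have hsplit : numConnSets G =
      numConnSetsAt G v + Nat.card {s : Finset V // v ∉ s ∧ (G.induce ↑s).Connected} := by
    simp only [numConnSets, numConnSetsAt, Nat.card_eq_fintype_card]
    rw [← Fintype.card_subtype_or_disjoint _ _ fun r hp hq s hr => (hq s hr).1 (hp s hr).1]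
    exact Fintype.card_congr (Equiv.subtypeEquivRight fun s => by tauto)
  have hmap := natCard_connected_induce_map f hf fun _ => True
  simp only [true_and] at hmap
  rw [hsplit, numConnSets, hmap, add_comm]

theorem numConnSetsAt_eq_natCard_add_one {v w : V} (hv : G.neighborSet v = {w}) :
    numConnSetsAt G v =
      Nat.card {s : Finset V // v ∉ s ∧ w ∈ s ∧ (G.induce s).Connected} + 1 := by
  classical
  have hvw : G.Adj v w := by simp [← mem_neighborSet, hv]
  have hsingleton : (G.induce ↑({v} : Finset V)).Connected := by
    rw [coe_singleton]
    exact .of_subsingleton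
  rw [numConnSetsAt, ← Finite.card_option]
  refine (Nat.card_eq_of_bijective (fun o => o.elim ⟨{v}, mem_singleton_self v, hsingleton⟩
    fun s => ⟨insert v s.1, mem_insert_self v s.1, by
      rw [coe_insert]; exact connected_induce_insert s.2.2.2 s.2.2.1 hvw.symm⟩) ⟨?_, ?_⟩).symm
  · have hw : w ∉ ({v} : Finset V) := by simpa using hvw.ne'
    intro o o' h
    rcases o with _ | ⟨s, hvs, hws, _⟩ <;> rcases o' with _ | ⟨t, hvt, hwt, _⟩ <;>
      simp only [Option.elim, Subtype.mk.injEq] at h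
    · rfl
    · exact absurd (h ▸ mem_insert_of_mem hwt) hw
    · exact absurd (h ▸ mem_insert_of_mem hws) hw
    · congr
      rw [← erase_insert hvs, h, erase_insert hvt]
  · rintro ⟨s, hvs, hs⟩
    by_cases hsv : s = {v}
    · exact ⟨none, Subtype.ext hsv.symm⟩
    obtain ⟨x, hx, hxv⟩ : ∃ x ∈ s, x ≠ v := by
      by_contra! h
      exact hsv (eq_singleton_iff_unique_mem.2 ⟨hvs, h⟩)
    obtain ⟨y, hy, hvy⟩ := exists_adj_of_connected_induce hs hvs hx hxv
    obtain rfl : y = w := by rwa [← Set.mem_singleton_iff, ← hv]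
    have herase : (G.induce ↑(s.erase v)).Connected := by
      rw [coe_erase]
      refine (connected_iff _).2 ⟨?_, ⟨y, hy, hvw.ne'⟩⟩
      exact hs.preconnected.induce_diff_singleton (hv ▸ Set.subsingleton_singleton)
    exact ⟨some ⟨s.erase v, notMem_erase v s, mem_erase.2 ⟨hvw.ne', hy⟩, herase⟩,
      Subtype.ext (insert_erase hvs)⟩

theorem numConnSetsAt_eq_add_one_of_neighborSet_eq (f : H ↪g G) {v : V}
    (hf : Set.range f = {v}ᶜ) {u : W} (hv : G.neighborSet v = {f u}) :
    numConnSetsAt G v = numConnSetsAt H u + 1 := by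
  have hmap := natCard_connected_induce_map f hf fun s => f u ∈ s
  simp only [mem_map, RelEmbedding.coe_toEmbedding, f.injective.eq_iff, exists_eq_right] at hmap
  rw [numConnSetsAt_eq_natCard_add_one hv, numConnSetsAt, hmap]

end SimpleGraph

open SimpleGraph

instance (n : ℕ) : DecidableRel (Agraph n).Adj :=
  fun a b => decidable_of_iff' _ (fromRel_adj _ a b)

def Agraph.castSuccEmb (n : ℕ) : Agraph n ↪g Agraph (n + 1) where
  toEmbedding := Fin.castSuccEmb
  map_rel_iff' := by
    intro a b
    simp only [Agraph, fromRel_adj, Fin.coe_castSuccEmb, Fin.val_castSucc, ne_eq, Fin.castSucc_inj]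

theorem Agraph.range_castSuccEmb (n : ℕ) :
    Set.range (Agraph.castSuccEmb n) = {Fin.last n}ᶜ := by
  ext i
  simp only [Agraph.castSuccEmb, RelEmbedding.coe_mk, Fin.coe_castSuccEmb, Fin.range_castSucc,
    Set.mem_ofPred_eq, Set.mem_compl_iff, Set.mem_singleton_iff, Fin.ext_iff, Fin.val_last]
  omega

theorem Agraph.neighborSet_last {n : ℕ} (hn : 3 ≤ n) :
    (Agraph (n + 2)).neighborSet (Fin.last (n + 1)) = {(Fin.last n).castSucc} := by
  ext x
  have := x.isLt
  simp only [mem_neighborSet, Agraph, fromRel_adj, Set.mem_singleton_iff, ne_eq, Fin.ext_iff,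
    Fin.val_last, Fin.val_castSucc]
  omega

theorem numConnSetsAt_agraph_last (k : ℕ) :
    numConnSetsAt (Agraph (k + 4)) (Fin.last (k + 3)) = k + 7 := by
  induction k with
  | zero =>
    rw [numConnSetsAt, Nat.card_eq_fintype_card, Fintype.card_subtype]
    decide
  | succ k ih =>
    rw [show k + 1 + 7 = k + 7 + 1 by ring, ← ih]
    exact numConnSetsAt_eq_add_one_of_neighborSet_eq (Agraph.castSuccEmb _)
      (Agraph.range_castSuccEmb _) (Agraph.neighborSet_last (by omega : 3 ≤ k + 3))

theorem two_mul_numConnSets_agraph (k : ℕ) :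
    2 * numConnSets (Agraph (k + 4)) = k ^ 2 + 15 * k + 28 := by
  induction k with
  | zero =>
    rw [numConnSets, Nat.card_eq_fintype_card, Fintype.card_subtype]
    decide
  | succ k ih =>
    rw [show k + 1 + 4 = k + 4 + 1 by ring,
      numConnSets_eq_add_numConnSetsAt (Agraph.castSuccEmb _) (Agraph.range_castSuccEmb _),
      mul_add, ih, show k + 4 = k + 1 + 3 by ring, numConnSetsAt_agraph_last (k + 1)]
    ring

theorem numConnSets_Agraph (n : ℕ) (hn : 4 ≤ n) :
    numConnSets (Agraph n) = (n ^ 2 + 7 * n - 16) / 2 := by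
  obtain ⟨k, rfl⟩ := Nat.exists_eq_add_of_le' hn
  have h := two_mul_numConnSets_agraph k
  rw [show (k + 4) ^ 2 + 7 * (k + 4) - 16 = k ^ 2 + 15 * k + 28 by
    rw [Nat.sub_eq_iff_eq_add (by nlinarith)]; ring]
  omega
end

section
/- If G is a bicyclic graph on n vertices and v is any vertex of G, then the number of connected sets of G containing v is at least n + 3. -/
open SimpleGraph

/-!
Fix a shortest walk from `v` to each vertex `u`. Its vertex set `P u` is a connected set containing
`v` with exactly one vertex at each distance `0, …, d(v, u)` from `v`, so `u ↦ P u` is injective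
and gives `n` connected sets; it remains to find three more that are not of the form `P u`.

If a vertex `x` has a neighbour `y` one step closer to `v` that is not on `P x`, take `P x ∪ P y`,
`P y ∪ P y'` (with `y'` the vertex of `P x` at the distance of `y`) and `insert x (P y)`.
Otherwise every vertex other than `v` has a unique neighbour closer to `v`, so at most `n - 1`
edges join vertices at different distances from `v`, and at least two edges join equidistant
vertices. Then three vertices are equidistant from `v`, or there are two equidistant pairs at
different distances, and unions of the sets `P u` provide the three missing sets.
-/

open Finset

lemma Sym2.exists_three_or_two_pairs_of_isDiag_map {α β : Type*} [LinearOrder β] {f : α → β}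
    {e₁ e₂ : Sym2 α} (he₁ : ¬e₁.IsDiag) (he₂ : ¬e₂.IsDiag) (hf₁ : (e₁.map f).IsDiag)
    (hf₂ : (e₂.map f).IsDiag) (hne : e₁ ≠ e₂) :
    (∃ a b c, a ≠ b ∧ a ≠ c ∧ b ≠ c ∧ f b = f a ∧ f c = f a) ∨
      ∃ a b c d, a ≠ b ∧ c ≠ d ∧ f b = f a ∧ f d = f c ∧ f a < f c := by
  induction e₁ using Sym2.ind with | _ a b => ?_
  induction e₂ using Sym2.ind with | _ c d => ?_
  simp only [Sym2.mk_isDiag_iff, Sym2.map_mk] at he₁ he₂ hf₁ hf₂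
  rcases lt_trichotomy (f a) (f c) with h | h | h
  · exact .inr ⟨a, b, c, d, he₁, he₂, hf₁.symm, hf₂.symm, h⟩
  · left
    by_cases hc : c = a ∨ c = b
    · have hd : d ≠ a ∧ d ≠ b := by
        constructor <;> rintro rfl <;> rcases hc with rfl | rfl <;> simp_all [Sym2.eq_swap]
      exact ⟨a, b, d, he₁, hd.1.symm, hd.2.symm, hf₁.symm, by rw [← hf₂, ← h]⟩
    · rw [not_or] at hc
      exact ⟨a, b, c, he₁, Ne.symm hc.1, Ne.symm hc.2, hf₁.symm, h.symm⟩
  · exact .inr ⟨c, d, a, b, he₂, he₁, hf₂.symm, hf₁.symm, h⟩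

namespace SimpleGraph

variable {V : Type*} {G : SimpleGraph V}

namespace Walk

variable {u v w : V}

lemma dist_getVert_of_length_eq_dist (p : G.Walk u v) (hp : p.length = G.dist u v) {i : ℕ}
    (hi : i ≤ p.length) : G.dist u (p.getVert i) = i := by
  have htake := G.dist_le (p.take i)
  have hdrop := G.dist_le (p.drop i)
  have htri := (p.take i).reachable.dist_triangle_left v
  rw [take_length, min_eq_left hi] at htake
  rw [drop_length] at hdrop
  omega

lemma getVert_dist_of_length_eq_dist (p : G.Walk u v) (hp : p.length = G.dist u v)
    (hw : w ∈ p.support) : p.getVert (G.dist u w) = w ∧ G.dist u w ≤ G.dist u v := by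
  obtain ⟨i, rfl, hi⟩ := mem_support_iff_exists_getVert.mp hw
  rw [p.dist_getVert_of_length_eq_dist hp hi]
  exact ⟨rfl, hp ▸ hi⟩

end Walk

def IsConnSetAt (G : SimpleGraph V) (v : V) (s : Finset V) : Prop :=
  v ∈ s ∧ (G.induce (s : Set V)).Connected

lemma IsConnSetAt.union [DecidableEq V] {v : V} {s t : Finset V} (hs : G.IsConnSetAt v s)
    (ht : G.IsConnSetAt v t) : G.IsConnSetAt v (s ∪ t) :=
  ⟨mem_union_left _ hs.1, by
    rw [coe_union]
    exact induce_union_connected hs.2.preconnected ht.2.preconnected ⟨v, hs.1, ht.1⟩⟩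

lemma IsConnSetAt.insert [DecidableEq V] {v x y : V} {s : Finset V} (hs : G.IsConnSetAt v s)
    (hxy : G.Adj x y) (hy : y ∈ s) : G.IsConnSetAt v (insert x s) :=
  ⟨mem_insert_of_mem hs.1, by
    rw [coe_insert, Set.insert_eq]
    refine connected_induce_union ?_ hs.2.preconnected rfl hy hxy
    rw [induce_singleton_eq_top]
    exact preconnected_top⟩

lemma two_le_card_filter_isDiag_map_dist [Fintype V] [DecidableRel G.Adj] (v : V)
    (huniq : ∀ ⦃x y y'⦄, G.Adj x y → G.Adj x y' → G.dist v y + 1 = G.dist v x →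
      G.dist v y' + 1 = G.dist v x → y = y')
    (hE : Fintype.card V + 1 ≤ #G.edgeFinset) :
    2 ≤ #{e ∈ G.edgeFinset | (e.map (G.dist v)).IsDiag} := by
  classical
  have hsteep : #{e ∈ G.edgeFinset | ¬(e.map (G.dist v)).IsDiag} ≤ #(univ.erase v) := by
    refine card_le_card_of_forall_subsingleton
      (fun e x ↦ ∃ y, e = s(x, y) ∧ G.dist v y + 1 = G.dist v x) ?_ ?_
    · intro e he
      induction e using Sym2.ind with | _ a b => ?_
      rw [mem_filter, mem_edgeFinset, mem_edgeSet, Sym2.map_mk, Sym2.mk_isDiag_iff] at he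
      have hv : ∀ x, G.dist v x ≠ 0 → x ∈ univ.erase v := fun x hx ↦
        mem_erase.mpr ⟨by rintro rfl; exact hx dist_self, mem_univ x⟩
      rcases he.1.diff_dist_adj (u := v) with h | h | h
      · exact absurd h.symm he.2
      · exact ⟨b, hv b (by omega), a, Sym2.eq_swap, by omega⟩
      · exact ⟨a, hv a (by omega), b, rfl, by omega⟩
    · rintro x - e₁ ⟨he₁, y₁, rfl, h₁⟩ e₂ ⟨he₂, y₂, rfl, h₂⟩
      rw [mem_filter, mem_edgeFinset, mem_edgeSet] at he₁ he₂
      rw [huniq he₁.1 he₂.1 h₁ h₂]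
  have hsplit := card_filter_add_card_filter_not (s := G.edgeFinset)
    (fun e ↦ (e.map (G.dist v)).IsDiag)
  have hpos : 0 < Fintype.card V := Fintype.card_pos_iff.mpr ⟨v⟩
  rw [card_erase_of_mem (mem_univ v), card_univ] at hsteep
  omega

namespace Connected

noncomputable def geodesic (hc : G.Connected) (v u : V) : G.Walk v u :=
  (hc.exists_walk_length_eq_dist v u).choose

open Classical in
noncomputable def geodesicSet (hc : G.Connected) (v u : V) : Finset V :=
  (hc.geodesic v u).support.toFinset

section

variable (hc : G.Connected) {v u w w' : V}

lemma length_geodesic : (hc.geodesic v u).length = G.dist v u :=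
  (hc.exists_walk_length_eq_dist v u).choose_spec

lemma mem_geodesicSet : w ∈ hc.geodesicSet v u ↔ w ∈ (hc.geodesic v u).support := by
  classical
  exact List.mem_toFinset

lemma start_mem_geodesicSet : v ∈ hc.geodesicSet v u :=
  (hc.mem_geodesicSet).mpr (Walk.start_mem_support _)

lemma end_mem_geodesicSet : u ∈ hc.geodesicSet v u :=
  (hc.mem_geodesicSet).mpr (Walk.end_mem_support _)

lemma isConnSetAt_geodesicSet : G.IsConnSetAt v (hc.geodesicSet v u) := by
  classical
  refine ⟨hc.start_mem_geodesicSet, ?_⟩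
  rw [geodesicSet, List.coe_toFinset]
  exact (hc.geodesic v u).connected_induce_support

lemma dist_le_of_mem_geodesicSet (hw : w ∈ hc.geodesicSet v u) : G.dist v w ≤ G.dist v u :=
  ((hc.geodesic v u).getVert_dist_of_length_eq_dist hc.length_geodesic
    ((hc.mem_geodesicSet).mp hw)).2

lemma eq_of_mem_geodesicSet_of_dist_eq (hw : w ∈ hc.geodesicSet v u)
    (hw' : w' ∈ hc.geodesicSet v u) (h : G.dist v w = G.dist v w') : w = w' := by
  have key := fun {x} (hx : x ∈ hc.geodesicSet v u) ↦
    ((hc.geodesic v u).getVert_dist_of_length_eq_dist hc.length_geodesic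
      ((hc.mem_geodesicSet).mp hx)).1
  rw [← key hw, ← key hw', h]

lemma exists_mem_geodesicSet_dist_eq {i : ℕ} (hi : i ≤ G.dist v u) :
    ∃ w ∈ hc.geodesicSet v u, G.dist v w = i := by
  rw [← hc.length_geodesic] at hi
  exact ⟨_, (hc.mem_geodesicSet).mpr (Walk.getVert_mem_support _ _),
    (hc.geodesic v u).dist_getVert_of_length_eq_dist hc.length_geodesic hi⟩

lemma notMem_geodesicSet_of_dist_le (h : G.dist v u ≤ G.dist v w) (hne : w ≠ u) :
    w ∉ hc.geodesicSet v u := fun hw ↦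
  hne (hc.eq_of_mem_geodesicSet_of_dist_eq hw hc.end_mem_geodesicSet
    (le_antisymm (hc.dist_le_of_mem_geodesicSet hw) h))

lemma geodesicSet_injective : Function.Injective (hc.geodesicSet v) := by
  intro a b hab
  have ha : a ∈ hc.geodesicSet v b := hab ▸ hc.end_mem_geodesicSet
  have hb : b ∈ hc.geodesicSet v a := hab ▸ hc.end_mem_geodesicSet
  exact hc.eq_of_mem_geodesicSet_of_dist_eq ha hc.end_mem_geodesicSet
    (le_antisymm (hc.dist_le_of_mem_geodesicSet ha) (hc.dist_le_of_mem_geodesicSet hb))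

lemma notMem_range_geodesicSet {s : Finset V} {a b : V} (ha : a ∈ s) (hb : b ∈ s) (hab : a ≠ b)
    (h : G.dist v a = G.dist v b) : s ∉ Set.range (hc.geodesicSet v) := by
  rintro ⟨u, rfl⟩
  exact hab (hc.eq_of_mem_geodesicSet_of_dist_eq ha hb h)

lemma isConnSetAt_union_geodesicSet [DecidableEq V] (a b : V) :
    G.IsConnSetAt v (hc.geodesicSet v a ∪ hc.geodesicSet v b) :=
  hc.isConnSetAt_geodesicSet.union hc.isConnSetAt_geodesicSet

lemma notMem_union_geodesicSet [DecidableEq V] {a b : V} (ha : G.dist v a ≤ G.dist v w)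
    (hb : G.dist v b ≤ G.dist v w) (hwa : w ≠ a) (hwb : w ≠ b) :
    w ∉ hc.geodesicSet v a ∪ hc.geodesicSet v b := by
  rw [mem_union, not_or]
  exact ⟨hc.notMem_geodesicSet_of_dist_le ha hwa, hc.notMem_geodesicSet_of_dist_le hb hwb⟩

lemma union_geodesicSet_notMem_range [DecidableEq V] {a b : V} (hab : a ≠ b)
    (h : G.dist v a = G.dist v b) :
    hc.geodesicSet v a ∪ hc.geodesicSet v b ∉ Set.range (hc.geodesicSet v) :=
  hc.notMem_range_geodesicSet (mem_union_left _ hc.end_mem_geodesicSet)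
    (mem_union_right _ hc.end_mem_geodesicSet) hab h

lemma card_add_card_le_numConnSetsAt [Fintype V] {T : Finset (Finset V)}
    (hT : ∀ s ∈ T, G.IsConnSetAt v s ∧ s ∉ Set.range (hc.geodesicSet v)) :
    Fintype.card V + #T ≤ numConnSetsAt G v := by
  classical
  have hdisj : Disjoint (univ.image (hc.geodesicSet v)) T := by
    rw [disjoint_right]
    intro s hs hsP
    obtain ⟨u, -, rfl⟩ := mem_image.mp hsP
    exact (hT _ hs).2 ⟨u, rfl⟩
  calc Fintype.card V + #T = #(univ.image (hc.geodesicSet v) ∪ T) := by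
        rw [card_union_of_disjoint hdisj, card_image_of_injective _ hc.geodesicSet_injective,
          card_univ]
    _ ≤ #{s | G.IsConnSetAt v s} := by
        refine card_le_card fun s hs ↦ mem_filter.mpr ⟨mem_univ _, ?_⟩
        rcases mem_union.mp hs with hs | hs
        · obtain ⟨u, -, rfl⟩ := mem_image.mp hs
          exact hc.isConnSetAt_geodesicSet
        · exact (hT s hs).1
    _ = numConnSetsAt G v := by
        rw [numConnSetsAt, Nat.card_eq_fintype_card, Fintype.card_subtype]
        congr

lemma card_add_three_le_numConnSetsAt [Fintype V] {s₁ s₂ s₃ : Finset V}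
    (h₁ : G.IsConnSetAt v s₁ ∧ s₁ ∉ Set.range (hc.geodesicSet v))
    (h₂ : G.IsConnSetAt v s₂ ∧ s₂ ∉ Set.range (hc.geodesicSet v))
    (h₃ : G.IsConnSetAt v s₃ ∧ s₃ ∉ Set.range (hc.geodesicSet v))
    (h₁₂ : s₁ ≠ s₂) (h₁₃ : s₁ ≠ s₃) (h₂₃ : s₂ ≠ s₃) :
    Fintype.card V + 3 ≤ numConnSetsAt G v := by
  classical
  have h := hc.card_add_card_le_numConnSetsAt (T := {s₁, s₂, s₃}) (by
    simp only [mem_insert, mem_singleton]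
    rintro s (rfl | rfl | rfl) <;> assumption)
  rwa [card_eq_three.mpr ⟨s₁, s₂, s₃, h₁₂, h₁₃, h₂₃, rfl⟩] at h

lemma card_add_three_le_numConnSetsAt_of_adj_notMem_geodesicSet [Fintype V] {x y : V}
    (hxy : G.Adj x y) (hd : G.dist v y + 1 = G.dist v x) (hy : y ∉ hc.geodesicSet v x) :
    Fintype.card V + 3 ≤ numConnSetsAt G v := by
  classical
  set P := hc.geodesicSet v
  obtain ⟨y', hy'x, hy'd⟩ := hc.exists_mem_geodesicSet_dist_eq (u := x)
    (show G.dist v y ≤ G.dist v x by omega)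
  have hy'y : y' ≠ y := fun h ↦ hy (h ▸ hy'x)
  have hxS₂ : x ∉ P y ∪ P y' :=
    hc.notMem_union_geodesicSet (by omega) (by omega) (by rintro rfl; omega) (by rintro rfl; omega)
  have hy'S₃ : y' ∉ insert x (P y) := by
    rw [mem_insert, not_or]
    exact ⟨by rintro rfl; omega, hc.notMem_geodesicSet_of_dist_le hy'd.ge hy'y⟩
  have hS₃ : insert x (P y) ∉ Set.range P := by
    rintro ⟨u, hu⟩
    have hxu := hc.dist_le_of_mem_geodesicSet (hu ▸ mem_insert_self x (P y) : x ∈ P u)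
    rcases mem_insert.mp (hu ▸ hc.end_mem_geodesicSet : u ∈ insert x (P y)) with rfl | huy
    · exact hy (hu ▸ mem_insert_of_mem hc.end_mem_geodesicSet)
    · have := hc.dist_le_of_mem_geodesicSet huy
      omega
  refine hc.card_add_three_le_numConnSetsAt (s₁ := P x ∪ P y) (s₂ := P y ∪ P y')
    (s₃ := insert x (P y))
    ⟨hc.isConnSetAt_union_geodesicSet x y,
      hc.notMem_range_geodesicSet (mem_union_left _ hy'x)
        (mem_union_right _ hc.end_mem_geodesicSet) hy'y hy'd⟩
    ⟨hc.isConnSetAt_union_geodesicSet y y',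
      hc.union_geodesicSet_notMem_range hy'y.symm hy'd.symm⟩
    ⟨hc.isConnSetAt_geodesicSet.insert hxy hc.end_mem_geodesicSet, hS₃⟩
    (ne_of_mem_of_not_mem' (mem_union_left _ hc.end_mem_geodesicSet) hxS₂)
    (ne_of_mem_of_not_mem' (mem_union_left _ hy'x) hy'S₃)
    (ne_of_mem_of_not_mem' (mem_insert_self _ _) hxS₂).symm

end

lemma card_add_three_le_numConnSetsAt_of_three_equidistant [Fintype V] (hc : G.Connected) {v : V}
    {a b c : V} (hab : a ≠ b) (hac : a ≠ c) (hbc : b ≠ c) (hdb : G.dist v b = G.dist v a)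
    (hdc : G.dist v c = G.dist v a) :
    Fintype.card V + 3 ≤ numConnSetsAt G v := by
  classical
  set P := hc.geodesicSet v
  have hcS₁ : c ∉ P a ∪ P b :=
    hc.notMem_union_geodesicSet (by omega) (by omega) hac.symm hbc.symm
  have haS₃ : a ∉ P b ∪ P c := hc.notMem_union_geodesicSet (by omega) (by omega) hab hac
  refine hc.card_add_three_le_numConnSetsAt (s₁ := P a ∪ P b) (s₂ := P a ∪ P c) (s₃ := P b ∪ P c)
    ⟨hc.isConnSetAt_union_geodesicSet a b, hc.union_geodesicSet_notMem_range hab hdb.symm⟩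
    ⟨hc.isConnSetAt_union_geodesicSet a c, hc.union_geodesicSet_notMem_range hac hdc.symm⟩
    ⟨hc.isConnSetAt_union_geodesicSet b c,
      hc.union_geodesicSet_notMem_range hbc (hdb.trans hdc.symm)⟩
    (ne_of_mem_of_not_mem' (mem_union_right _ hc.end_mem_geodesicSet) hcS₁).symm
    (ne_of_mem_of_not_mem' (mem_union_right _ hc.end_mem_geodesicSet) hcS₁).symm
    (ne_of_mem_of_not_mem' (mem_union_left _ hc.end_mem_geodesicSet) haS₃)

lemma card_add_three_le_numConnSetsAt_of_two_equidistant_pairs [Fintype V] (hc : G.Connected)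
    {v p q x y : V} (hpq : p ≠ q) (hxy : x ≠ y) (hq : G.dist v q = G.dist v p)
    (hy : G.dist v y = G.dist v x) (hpx : G.dist v p < G.dist v x) :
    Fintype.card V + 3 ≤ numConnSetsAt G v := by
  classical
  set P := hc.geodesicSet v
  have hxS₁ : x ∉ P p ∪ P q :=
    hc.notMem_union_geodesicSet (by omega) (by omega) (by rintro rfl; omega) (by rintro rfl; omega)
  have hyS₃ : y ∉ P p ∪ P q ∪ P x := by
    rw [mem_union, not_or]
    exact ⟨hc.notMem_union_geodesicSet (by omega) (by omega) (by rintro rfl; omega)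
      (by rintro rfl; omega), hc.notMem_geodesicSet_of_dist_le hy.ge hxy.symm⟩
  refine hc.card_add_three_le_numConnSetsAt (s₁ := P p ∪ P q) (s₂ := P x ∪ P y)
    (s₃ := P p ∪ P q ∪ P x)
    ⟨hc.isConnSetAt_union_geodesicSet p q, hc.union_geodesicSet_notMem_range hpq hq.symm⟩
    ⟨hc.isConnSetAt_union_geodesicSet x y, hc.union_geodesicSet_notMem_range hxy hy.symm⟩
    ⟨(hc.isConnSetAt_union_geodesicSet p q).union hc.isConnSetAt_geodesicSet,
      hc.notMem_range_geodesicSet (mem_union_left _ (mem_union_left _ hc.end_mem_geodesicSet))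
      (mem_union_left _ (mem_union_right _ hc.end_mem_geodesicSet)) hpq hq.symm⟩
    (ne_of_mem_of_not_mem' (mem_union_left _ hc.end_mem_geodesicSet) hxS₁).symm
    (ne_of_mem_of_not_mem' (mem_union_right _ hc.end_mem_geodesicSet) hxS₁).symm
    (ne_of_mem_of_not_mem' (mem_union_right _ hc.end_mem_geodesicSet) hyS₃)

end Connected

end SimpleGraph

open SimpleGraph in
/-- In a bicyclic graph on `n` vertices, every vertex lies in at least `n + 3`
connected sets. -/
theorem numConnSetsAt_ge_of_bicyclic
    {V : Type*} [Fintype V] (n : ℕ) (hn : Fintype.card V = n)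
    (G : SimpleGraph V) (hG : Bicyclic G) (v : V) :
    n + 3 ≤ numConnSetsAt G v := by
  classical
  obtain ⟨hc, hE⟩ := hG
  subst hn
  by_cases hA : ∃ x y, G.Adj x y ∧ G.dist v y + 1 = G.dist v x ∧ y ∉ hc.geodesicSet v x
  · obtain ⟨x, y, hxy, hd, hy⟩ := hA
    exact hc.card_add_three_le_numConnSetsAt_of_adj_notMem_geodesicSet hxy hd hy
  push Not at hA
  have hflat := two_le_card_filter_isDiag_map_dist v
    (fun x y y' hy hy' hd hd' ↦ hc.eq_of_mem_geodesicSet_of_dist_eq (hA x y hy hd)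
      (hA x y' hy' hd') (by omega))
    (by rw [edgeFinset_card, ← Nat.card_eq_fintype_card (α := G.edgeSet), hE])
  obtain ⟨e₁, he₁, e₂, he₂, hne⟩ := one_lt_card.mp hflat
  rw [mem_filter, mem_edgeFinset] at he₁ he₂
  rcases Sym2.exists_three_or_two_pairs_of_isDiag_map (G.not_isDiag_of_mem_edgeSet he₁.1)
    (G.not_isDiag_of_mem_edgeSet he₂.1) he₁.2 he₂.2 hne with
    ⟨a, b, c, hab, hac, hbc, hdb, hdc⟩ | ⟨p, q, x, y, hpq, hxy, hq, hy, hpx⟩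
  · exact hc.card_add_three_le_numConnSetsAt_of_three_equidistant hab hac hbc hdb hdc
  · exact hc.card_add_three_le_numConnSetsAt_of_two_equidistant_pairs hpq hxy hq hy hpx
end

section
/- For all n ≥ 6, the graph R_n, obtained by identifying one vertex from each of two disjoint triangles into a single vertex w and attaching n − 5 pendant edges at w, satisfies N(R_n) = n + 1 + 2^{n−1}. -/
open SimpleGraph

section RgraphAux

open Finset in
private lemma Rgraph_adj {n : ℕ} (a b : Fin n) :
    (Rgraph n).Adj a b ↔ (a:ℕ) ≠ (b:ℕ) ∧
      ((a:ℕ) = 0 ∨ (b:ℕ) = 0 ∨ ((a:ℕ) = 1 ∧ (b:ℕ) = 2) ∨ ((b:ℕ) = 1 ∧ (a:ℕ) = 2) ∨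
       ((a:ℕ) = 3 ∧ (b:ℕ) = 4) ∨ ((b:ℕ) = 3 ∧ (a:ℕ) = 4)) := by
  simp only [Rgraph, fromRel_adj, ne_eq, Fin.ext_iff, Fin.val_zero]
  omega

private lemma Rgraph_conn_of_zero_mem {n : ℕ} (hn : 6 ≤ n) {s : Finset (Fin n)}
    (h0 : (⟨0, by omega⟩ : Fin n) ∈ s) :
    ((Rgraph n).induce (↑s : Set (Fin n))).Connected := by
  rw [connected_iff]
  refine ⟨?_, ⟨⟨⟨0, by omega⟩, h0⟩⟩⟩
  have key : ∀ x : (↑s : Set (Fin n)),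
      ((Rgraph n).induce ↑s).Reachable x ⟨⟨0, by omega⟩, h0⟩ := by
    rintro ⟨x, hx⟩
    by_cases hxz : (x : ℕ) = 0
    · have : x = (⟨0, by omega⟩ : Fin n) := Fin.ext hxz
      have : (⟨x, hx⟩ : (↑s : Set (Fin n))) = ⟨⟨0, by omega⟩, h0⟩ := Subtype.ext this
      rw [this]
    · apply Adj.reachable
      show (Rgraph n).Adj x ⟨0, by omega⟩
      rw [Rgraph_adj]
      simp
      omega
  intro a b; exact (key a).trans (key b).symm

private lemma Rgraph_conn_singleton {n : ℕ} (v : Fin n) :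
    ((Rgraph n).induce (↑({v} : Finset (Fin n)) : Set (Fin n))).Connected := by
  rw [connected_iff]
  refine ⟨?_, ⟨⟨v, by simp⟩⟩⟩
  rintro ⟨a, ha⟩ ⟨b, hb⟩
  simp only [Finset.coe_singleton, Set.mem_singleton_iff] at ha hb
  subst ha; subst hb; exact Reachable.refl _

private lemma Rgraph_conn_pair {n : ℕ} (u v : Fin n) (h : (Rgraph n).Adj u v) :
    ((Rgraph n).induce (↑({u, v} : Finset (Fin n)) : Set (Fin n))).Connected := by
  rw [connected_iff]
  refine ⟨?_, ⟨⟨u, by simp⟩⟩⟩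
  have key : ∀ x : (↑({u,v} : Finset (Fin n)) : Set (Fin n)),
      ((Rgraph n).induce _).Reachable x ⟨u, by simp⟩ := by
    rintro ⟨x, hx⟩
    simp only [Finset.coe_insert, Finset.coe_singleton, Set.mem_insert_iff,
      Set.mem_singleton_iff] at hx
    rcases hx with rfl | rfl
    · exact Reachable.refl _
    · exact Adj.reachable (by exact h.symm)
  intro a b; exact (key a).trans (key b).symm

private lemma Rgraph_side_invariant {n : ℕ} {s : Finset (Fin n)}
    (h0 : ∀ x ∈ s, (x : ℕ) ≠ 0)
    {a b : (↑s : Set (Fin n))}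
    (h : ((Rgraph n).induce ↑s).Reachable a b) :
    (((a : Fin n) : ℕ) ≤ 2 ↔ ((b : Fin n) : ℕ) ≤ 2) := by
  obtain ⟨w⟩ := h
  induction w with
  | nil => rfl
  | @cons u v c h p ih =>
    have hadj : (Rgraph n).Adj u.1 v.1 := h
    rw [Rgraph_adj] at hadj
    have hu := h0 u.1 u.2
    have hv := h0 v.1 v.2
    rw [← ih]
    omega

private lemma Rgraph_exists_neighbor {n : ℕ} {s : Finset (Fin n)}
    (hc : ((Rgraph n).induce (↑s : Set (Fin n))).Connected)
    (hcard : 2 ≤ s.card) {x : Fin n} (hx : x ∈ s) :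
    ∃ y ∈ s, (Rgraph n).Adj x y := by
  obtain ⟨z, hz, hne⟩ := Finset.exists_mem_ne hcard x
  have hr : ((Rgraph n).induce (↑s : Set (Fin n))).Reachable ⟨x, hx⟩ ⟨z, hz⟩ :=
    hc.preconnected _ _
  obtain ⟨w⟩ := hr
  cases w with
  | nil => exact absurd rfl hne
  | cons h p =>
    rename_i v
    exact ⟨v.1, v.2, h⟩

private lemma Rgraph_conn_classify {n : ℕ} (hn : 6 ≤ n) {s : Finset (Fin n)}
    (hc : ((Rgraph n).induce (↑s : Set (Fin n))).Connected)
    (h0 : (⟨0, by omega⟩ : Fin n) ∉ s) :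
    (∃ v, s = {v}) ∨ s = {(⟨1, by omega⟩ : Fin n), ⟨2, by omega⟩}
      ∨ s = {(⟨3, by omega⟩ : Fin n), ⟨4, by omega⟩} := by
  have h0' : ∀ x ∈ s, (x : ℕ) ≠ 0 := by
    intro x hx hx0
    exact h0 (by rwa [show (⟨0, by omega⟩ : Fin n) = x from (Fin.ext hx0.symm)])
  have hne : s.Nonempty := by
    obtain ⟨⟨x, hx⟩⟩ := hc.nonempty
    exact ⟨x, hx⟩
  rcases eq_or_lt_of_le (Finset.one_le_card.mpr hne) with h1 | h2
  · obtain ⟨v, hv⟩ := Finset.card_eq_one.mp h1.symm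
    exact Or.inl ⟨v, hv⟩
  · have hpart : ∀ x ∈ s, ((x:ℕ) = 1 ∧ ∃ y ∈ s, (y:ℕ) = 2) ∨ ((x:ℕ) = 2 ∧ ∃ y ∈ s, (y:ℕ) = 1)
        ∨ ((x:ℕ) = 3 ∧ ∃ y ∈ s, (y:ℕ) = 4) ∨ ((x:ℕ) = 4 ∧ ∃ y ∈ s, (y:ℕ) = 3) := by
      intro x hx
      obtain ⟨y, hy, hadj⟩ := Rgraph_exists_neighbor hc h2 hx
      rw [Rgraph_adj] at hadj
      have hx0 := h0' x hx
      have hy0 := h0' y hy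
      rcases hadj with ⟨hne', h⟩
      rcases h with h|h|h|h|h|h
      · omega
      · omega
      · exact Or.inl ⟨h.1, y, hy, h.2⟩
      · exact Or.inr (Or.inl ⟨h.2, y, hy, h.1⟩)
      · exact Or.inr (Or.inr (Or.inl ⟨h.1, y, hy, h.2⟩))
      · exact Or.inr (Or.inr (Or.inr ⟨h.2, y, hy, h.1⟩))
    have hrange : ∀ x ∈ s, (x:ℕ) = 1 ∨ (x:ℕ) = 2 ∨ (x:ℕ) = 3 ∨ (x:ℕ) = 4 := by
      intro x hx
      rcases hpart x hx with ⟨h,_⟩|⟨h,_⟩|⟨h,_⟩|⟨h,_⟩ <;> omega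
    have hside : ∀ x ∈ s, ∀ y ∈ s, ((x:ℕ) ≤ 2 ↔ (y:ℕ) ≤ 2) := fun x hx y hy =>
      Rgraph_side_invariant h0' (hc.preconnected ⟨x, hx⟩ ⟨y, hy⟩)
    obtain ⟨x, hx⟩ := hne
    have key : ∀ a b : ℕ, (a = 1 ∨ a = 3) → a + 1 = b → (∃ u ∈ s, (u:ℕ) = a) → (∃ v ∈ s, (v:ℕ) = b) →
        (∀ z ∈ s, (z:ℕ) = a ∨ (z:ℕ) = b) := by
      intro a b ha13 hab ⟨u, hu, hua⟩ ⟨v, hv, hvb⟩ z hz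
      have h1 := hside u hu z hz
      have h2 := hrange z hz
      have h3 := hrange u hu
      omega
    have pairEq : ∀ a b : ℕ, (ha : a < n) → (hb : b < n) → (a = 1 ∨ a = 3) → a + 1 = b →
        (∃ u ∈ s, (u:ℕ) = a) → (∃ v ∈ s, (v:ℕ) = b) →
        s = {(⟨a, ha⟩ : Fin n), ⟨b, hb⟩} := by
      intro a b ha hb ha13 hab hu hv
      obtain ⟨u, hu, hua⟩ := hu
      obtain ⟨v, hv, hvb⟩ := hv
      apply Finset.ext
      intro z
      simp only [Finset.mem_insert, Finset.mem_singleton, Fin.ext_iff]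
      constructor
      · intro hz
        exact key a b ha13 hab ⟨u, hu, hua⟩ ⟨v, hv, hvb⟩ z hz
      · rintro (h | h)
        · rwa [show z = u from Fin.ext (by omega)]
        · rwa [show z = v from Fin.ext (by omega)]
    rcases hpart x hx with ⟨hx1, y, hy, hy2⟩ | ⟨hx2, y, hy, hy1⟩ | ⟨hx3, y, hy, hy4⟩ | ⟨hx4, y, hy, hy3⟩
    · exact Or.inr (Or.inl (pairEq 1 2 (by omega) (by omega) (Or.inl rfl) rfl ⟨x, hx, hx1⟩ ⟨y, hy, hy2⟩))
    · exact Or.inr (Or.inl (pairEq 1 2 (by omega) (by omega) (Or.inl rfl) rfl ⟨y, hy, hy1⟩ ⟨x, hx, hx2⟩))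
    · exact Or.inr (Or.inr (pairEq 3 4 (by omega) (by omega) (Or.inr rfl) rfl ⟨x, hx, hx3⟩ ⟨y, hy, hy4⟩))
    · exact Or.inr (Or.inr (pairEq 3 4 (by omega) (by omega) (Or.inr rfl) rfl ⟨y, hy, hy3⟩ ⟨x, hx, hx4⟩))

open Classical in
private lemma Rgraph_card_mem_filter (n : ℕ) (hn : 6 ≤ n) :
    (Finset.univ.filter (fun s : Finset (Fin n) => (⟨0, by omega⟩ : Fin n) ∈ s)).card
      = 2 ^ (n - 1) := by
  classical
  set z : Fin n := ⟨0, by omega⟩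
  rw [show (2:ℕ) ^ (n-1) = ((Finset.univ.erase z).powerset).card by
    rw [Finset.card_powerset, Finset.card_erase_of_mem (Finset.mem_univ z),
      Finset.card_univ, Fintype.card_fin]]
  apply Finset.card_bij' (fun s _ => s.erase z) (fun t _ => insert z t)
  case hi =>
    intro s hs
    simp only [Finset.mem_powerset]
    intro x hx
    simp only [Finset.mem_erase] at hx ⊢
    exact ⟨hx.1, Finset.mem_univ x⟩
  case hj =>
    intro t ht
    simp [Finset.mem_filter]
  case left_inv =>
    intro s hs
    simp only [Finset.mem_filter] at hs
    exact Finset.insert_erase hs.2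
  case right_inv =>
    intro t ht
    simp only [Finset.mem_powerset] at ht
    apply Finset.erase_insert
    intro hz
    have := ht hz
    simp at this

end RgraphAux

private def RTset (n : ℕ) (hn : 6 ≤ n) : Finset (Finset (Fin n)) :=
  ((Finset.univ.filter (fun v : Fin n => v ≠ ⟨0, by omega⟩)).image
      fun v => ({v} : Finset (Fin n)))
    ∪ {({⟨1, by omega⟩, ⟨2, by omega⟩} : Finset (Fin n)),
       ({⟨3, by omega⟩, ⟨4, by omega⟩} : Finset (Fin n))}

private lemma RTset_not_zero_mem {n : ℕ} (hn : 6 ≤ n) {s : Finset (Fin n)}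
    (hs : s ∈ RTset n hn) : (⟨0, by omega⟩ : Fin n) ∉ s := by
  simp only [RTset, Finset.mem_union, Finset.mem_image, Finset.mem_insert,
    Finset.mem_singleton, Finset.mem_filter] at hs
  rcases hs with ⟨v, ⟨_, hvz⟩, rfl⟩ | rfl | rfl
  · simp only [Finset.mem_singleton]
    exact fun h => hvz h.symm
  · simp only [Finset.mem_insert, Finset.mem_singleton, Fin.ext_iff]
    omega
  · simp only [Finset.mem_insert, Finset.mem_singleton, Fin.ext_iff]
    omega

set_option maxHeartbeats 1000000 in
private lemma RTset_card {n : ℕ} (hn : 6 ≤ n) : (RTset n hn).card = n + 1 := by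
  have hv12 : ({(⟨1, by omega⟩ : Fin n), ⟨2, by omega⟩} : Finset (Fin n)).card = 2 := by
    rw [Finset.card_insert_of_notMem (by simp [Fin.ext_iff]), Finset.card_singleton]
  have hv34 : ({(⟨3, by omega⟩ : Fin n), ⟨4, by omega⟩} : Finset (Fin n)).card = 2 := by
    rw [Finset.card_insert_of_notMem (by simp [Fin.ext_iff]), Finset.card_singleton]
  unfold RTset
  have hdisj2 : Disjoint
      ((Finset.univ.filter (fun v : Fin n => v ≠ ⟨0, by omega⟩)).image
        fun v => ({v} : Finset (Fin n)))
      ({({⟨1, by omega⟩, ⟨2, by omega⟩} : Finset (Fin n)),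
        ({⟨3, by omega⟩, ⟨4, by omega⟩} : Finset (Fin n))} : Finset (Finset (Fin n))) := by
    rw [Finset.disjoint_left]
    rintro s hs hs2
    simp only [Finset.mem_image] at hs
    obtain ⟨v, _, rfl⟩ := hs
    simp only [Finset.mem_insert, Finset.mem_singleton] at hs2
    rcases hs2 with h | h
    · have := congrArg Finset.card h
      rw [Finset.card_singleton, hv12] at this
      omega
    · have := congrArg Finset.card h
      rw [Finset.card_singleton, hv34] at this
      omega
  have hinj : Function.Injective (fun v : Fin n => ({v} : Finset (Fin n))) :=
    fun a b h => Finset.singleton_inj.mp (by simpa using h)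
  rw [Finset.card_union_of_disjoint hdisj2,
    Finset.card_image_of_injective _ hinj,
    Finset.filter_ne', Finset.card_erase_of_mem (Finset.mem_univ _),
    Finset.card_univ, Fintype.card_fin]
  have h2 : ({({(⟨1, by omega⟩ : Fin n), ⟨2, by omega⟩} : Finset (Fin n)),
      ({⟨3, by omega⟩, ⟨4, by omega⟩} : Finset (Fin n))} :
      Finset (Finset (Fin n))).card = 2 := by
    rw [Finset.card_insert_of_notMem, Finset.card_singleton]
    simp only [Finset.mem_singleton]
    intro h
    have : (⟨1, by omega⟩ : Fin n) ∈
        ({(⟨3, by omega⟩ : Fin n), ⟨4, by omega⟩} : Finset (Fin n)) := by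
      rw [← h]; simp
    simp only [Finset.mem_insert, Finset.mem_singleton, Fin.ext_iff] at this
    omega
  rw [h2]
  omega

open Classical in
private lemma Rgraph_filter_split {n : ℕ} (hn : 6 ≤ n) :
    Finset.univ.filter
      (fun s : Finset (Fin n) => ((Rgraph n).induce (↑s : Set (Fin n))).Connected)
      = (Finset.univ.filter (fun s : Finset (Fin n) => (⟨0, by omega⟩ : Fin n) ∈ s))
        ∪ RTset n hn := by
  ext s
  simp only [RTset, Finset.mem_filter, Finset.mem_univ, true_and, Finset.mem_union,
    Finset.mem_image, Finset.mem_insert, Finset.mem_singleton]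
  constructor
  · intro hP
    by_cases hzs : (⟨0, by omega⟩ : Fin n) ∈ s
    · exact Or.inl hzs
    · rcases Rgraph_conn_classify hn hP hzs with ⟨v, rfl⟩ | h | h
      · refine Or.inr (Or.inl ⟨v, ⟨?_, rfl⟩⟩)
        intro hvz
        exact hzs (by simp [hvz])
      · exact Or.inr (Or.inr (Or.inl h))
      · exact Or.inr (Or.inr (Or.inr h))
  · rintro (hzs | ⟨v, hv, rfl⟩ | rfl | rfl)
    · exact Rgraph_conn_of_zero_mem hn hzs
    · exact Rgraph_conn_singleton v
    · refine Rgraph_conn_pair _ _ ?_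
      rw [Rgraph_adj]
      exact ⟨by simp, Or.inr (Or.inr (Or.inl ⟨rfl, rfl⟩))⟩
    · refine Rgraph_conn_pair _ _ ?_
      rw [Rgraph_adj]
      exact ⟨by simp, Or.inr (Or.inr (Or.inr (Or.inr (Or.inl ⟨rfl, rfl⟩))))⟩

theorem numConnSets_Rgraph (n : ℕ) (hn : 6 ≤ n) :
    numConnSets (Rgraph n) = n + 1 + 2 ^ (n - 1) := by
  classical
  have hcard : numConnSets (Rgraph n) =
      (Finset.univ.filter
        (fun s : Finset (Fin n) => ((Rgraph n).induce (↑s : Set (Fin n))).Connected)).card := by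
    rw [numConnSets,
      Nat.card_congr (Equiv.subtypeEquivRight (q := fun s : Finset (Fin n) =>
        s ∈ Finset.univ.filter
          (fun s : Finset (Fin n) => ((Rgraph n).induce (↑s : Set (Fin n))).Connected))
        (by intro s; simp)),
      Nat.card_eq_finsetCard]
  have hdisj : Disjoint
      (Finset.univ.filter (fun s : Finset (Fin n) => (⟨0, by omega⟩ : Fin n) ∈ s))
      (RTset n hn) := by
    rw [Finset.disjoint_left]
    intro s hs hsT
    exact RTset_not_zero_mem hn hsT (Finset.mem_filter.mp hs).2
  rw [hcard, Rgraph_filter_split hn, Finset.card_union_of_disjoint hdisj,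
    Rgraph_card_mem_filter n hn, RTset_card hn]
  omega
end
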